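/- arXiv:math/0410081 — 5 statements merged into one kernel-verified Lean document; each statement's English description precedes it below -/
import Mathlib

section
/- Fix α ∈ [0, 1) and γ > 0, and define G(t) = ((1 - α)/(αγ))·((1 + γt/(1 - α))^α - 1) for α ∈ (0, 1), and G(t) = γ^{-1} log(1 + γt) for α = 0. Then G is infinitely differentiable on [0, ∞) with G'(t) = (1 + γt/(1 - α))^{α - 1}, and for all t ≥ 0: (i) G'(t) + t G''(t) = (1 + αγt/(1 - α))·(1 + γt/(1 - α))^{α - 2} > 0; and (ii) G''(t)/G'(t) + t·[G'''(t)/G'(t) - (G''(t)/G'(t))^2] = -γ·(1 + γt/(1 - α))^{-2} ≤ 0. -/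
open Set

/-- the IGG(α) negative log frailty transform
`G(t) = ((1-α)/(αγ))((1 + γt/(1-α))^α - 1)` for `α ∈ (0,1)` (and
`G(t) = γ⁻¹ log(1 + γt)` for `α = 0`) is infinitely differentiable on `[0, ∞)` with
`G'(t) = (1 + γt/(1-α))^(α-1)`, and satisfies the paper's condition (E1):
`G'(t) + t G''(t) = (1 + αγt/(1-α))(1 + γt/(1-α))^(α-2) > 0` and
`G''/G' + t[G'''/G' - (G''/G')²] = -γ(1 + γt/(1-α))^(-2) ≤ 0` for all `t ≥ 0`. -/
theorem stmt_3 (α γ : ℝ) (hα : α ∈ Ico (0:ℝ) 1) (hγ : 0 < γ)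
    (G : ℝ → ℝ)
    (hG : G = fun t : ℝ => if α = 0 then γ⁻¹ * Real.log (1 + γ * t)
      else ((1 - α) / (α * γ)) * ((1 + γ * t / (1 - α)) ^ α - 1)) :
    ContDiffOn ℝ (⊤ : ℕ∞) G (Ici 0) ∧
    (∀ t : ℝ, 0 ≤ t → deriv G t = (1 + γ * t / (1 - α)) ^ (α - 1)) ∧
    (∀ t : ℝ, 0 ≤ t →
      deriv G t + t * deriv (deriv G) t
          = (1 + α * γ * t / (1 - α)) * (1 + γ * t / (1 - α)) ^ (α - 2) ∧
      0 < deriv G t + t * deriv (deriv G) t ∧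
      deriv (deriv G) t / deriv G t
          + t * (deriv (deriv (deriv G)) t / deriv G t
              - (deriv (deriv G) t / deriv G t) ^ 2)
          = -γ * (1 + γ * t / (1 - α)) ^ (-2 : ℝ) ∧
      deriv (deriv G) t / deriv G t
          + t * (deriv (deriv (deriv G)) t / deriv G t
              - (deriv (deriv G) t / deriv G t) ^ 2) ≤ 0) := by
  subst hG
  obtain ⟨hα0, hα1⟩ := hα
  have h1α : (0:ℝ) < 1 - α := by linarith
  have h1αne : (1:ℝ) - α ≠ 0 := ne_of_gt h1α
  have hγne : γ ≠ 0 := ne_of_gt hγ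
  set G : ℝ → ℝ := fun t : ℝ => if α = 0 then γ⁻¹ * Real.log (1 + γ * t)
      else ((1 - α) / (α * γ)) * ((1 + γ * t / (1 - α)) ^ α - 1) with hGdef
  have hSopen : IsOpen {s : ℝ | 0 < 1 + γ * s / (1 - α)} :=
    isOpen_lt continuous_const (by fun_prop)
  have hmem : ∀ t : ℝ, 0 ≤ t → 0 < 1 + γ * t / (1 - α) := by
    intro t ht
    have : 0 ≤ γ * t / (1 - α) := by positivity
    linarith
  have hlin : ∀ t : ℝ, HasDerivAt (fun s : ℝ => 1 + γ * s / (1 - α)) (γ / (1 - α)) t := by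
    intro t
    simpa using (((hasDerivAt_id t).const_mul γ).div_const (1 - α)).const_add 1
  -- first derivative
  have hd1 : ∀ t : ℝ, 0 < 1 + γ * t / (1 - α) →
      HasDerivAt G ((1 + γ * t / (1 - α)) ^ (α - 1)) t := by
    intro t ht
    by_cases h0 : α = 0
    · subst h0
      have ht' : 0 < 1 + γ * t := by
        simpa using ht
      have hl : HasDerivAt (fun s : ℝ => 1 + γ * s) γ t := by
        simpa using ((hasDerivAt_id t).const_mul γ).const_add 1
      have h := (hl.log (ne_of_gt ht')).const_mul γ⁻¹
      have hGe : G = fun s : ℝ => γ⁻¹ * Real.log (1 + γ * s) := by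
        simp [hGdef]
      rw [hGe]
      refine h.congr_deriv ?_
      rw [show (0:ℝ) - 1 = -1 by norm_num]
      simp only [sub_zero, div_one, Real.rpow_neg_one]
      field_simp
    · have hαne : α ≠ 0 := h0
      have hGe : G = fun s : ℝ => ((1 - α) / (α * γ)) * ((1 + γ * s / (1 - α)) ^ α - 1) := by
        simp [hGdef, h0]
      rw [hGe]
      have h := (((hlin t).rpow_const (p := α) (Or.inl (ne_of_gt ht))).sub_const 1).const_mul
        ((1 - α) / (α * γ))
      refine h.congr_deriv ?_
      field_simp
  have hderiv1 : ∀ t : ℝ, 0 < 1 + γ * t / (1 - α) →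
      deriv G t = (1 + γ * t / (1 - α)) ^ (α - 1) := fun t ht => (hd1 t ht).deriv
  -- second derivative
  have heq1 : ∀ t : ℝ, 0 < 1 + γ * t / (1 - α) →
      deriv G =ᶠ[nhds t] fun s => (1 + γ * s / (1 - α)) ^ (α - 1) := by
    intro t ht
    filter_upwards [hSopen.mem_nhds ht] with s hs using hderiv1 s hs
  have hd2 : ∀ t : ℝ, 0 < 1 + γ * t / (1 - α) →
      HasDerivAt (fun s : ℝ => (1 + γ * s / (1 - α)) ^ (α - 1))
        (γ / (1 - α) * (α - 1) * (1 + γ * t / (1 - α)) ^ (α - 2)) t := by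
    intro t ht
    have h := (hlin t).rpow_const (p := α - 1) (Or.inl (ne_of_gt ht))
    rwa [show α - 1 - 1 = α - 2 by ring] at h
  have hderiv2 : ∀ t : ℝ, 0 < 1 + γ * t / (1 - α) →
      deriv (deriv G) t = γ / (1 - α) * (α - 1) * (1 + γ * t / (1 - α)) ^ (α - 2) := by
    intro t ht
    rw [(heq1 t ht).deriv_eq]
    exact (hd2 t ht).deriv
  -- third derivative
  have heq2 : ∀ t : ℝ, 0 < 1 + γ * t / (1 - α) →
      deriv (deriv G) =ᶠ[nhds t]
        fun s => γ / (1 - α) * (α - 1) * (1 + γ * s / (1 - α)) ^ (α - 2) := by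
    intro t ht
    filter_upwards [hSopen.mem_nhds ht] with s hs using hderiv2 s hs
  have hd3 : ∀ t : ℝ, 0 < 1 + γ * t / (1 - α) →
      HasDerivAt (fun s : ℝ => γ / (1 - α) * (α - 1) * (1 + γ * s / (1 - α)) ^ (α - 2))
        (γ / (1 - α) * (α - 1) * (γ / (1 - α) * (α - 2) *
          (1 + γ * t / (1 - α)) ^ (α - 3))) t := by
    intro t ht
    have h := ((hlin t).rpow_const (p := α - 2) (Or.inl (ne_of_gt ht))).const_mul
      (γ / (1 - α) * (α - 1))
    rw [show α - 2 - 1 = α - 3 by ring] at h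
    exact h
  have hderiv3 : ∀ t : ℝ, 0 < 1 + γ * t / (1 - α) →
      deriv (deriv (deriv G)) t = γ / (1 - α) * (α - 1) * (γ / (1 - α) * (α - 2) *
          (1 + γ * t / (1 - α)) ^ (α - 3)) := by
    intro t ht
    rw [(heq2 t ht).deriv_eq]
    exact (hd3 t ht).deriv
  -- smoothness
  have hcd : ContDiffOn ℝ (⊤ : ℕ∞) G (Ici 0) := by
    intro t ht
    have hx := hmem t ht
    apply ContDiffAt.contDiffWithinAt
    by_cases h0 : α = 0
    · have hGe : G = fun s : ℝ => γ⁻¹ * Real.log (1 + γ * s) := by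
        simp [hGdef, h0]
      rw [hGe]
      have hx' : (1:ℝ) + γ * t ≠ 0 := by
        rw [h0] at hx
        simp only [sub_zero, div_one] at hx
        linarith
      have hinner : ContDiffAt ℝ (⊤ : ℕ∞) (fun s : ℝ => 1 + γ * s) t := by fun_prop
      exact contDiffAt_const.mul (hinner.log hx')
    · have hGe : G = fun s : ℝ => ((1 - α) / (α * γ)) * ((1 + γ * s / (1 - α)) ^ α - 1) := by
        simp [hGdef, h0]
      rw [hGe]
      have hinner : ContDiffAt ℝ (⊤ : ℕ∞) (fun s : ℝ => 1 + γ * s / (1 - α)) t :=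
        contDiffAt_const.add ((contDiffAt_const.mul contDiffAt_id).div_const _)
      exact contDiffAt_const.mul ((hinner.rpow_const_of_ne (ne_of_gt hx)).sub contDiffAt_const)
  refine ⟨hcd, fun t ht => hderiv1 t (hmem t ht), fun t ht => ?_⟩
  have hx : 0 < 1 + γ * t / (1 - α) := hmem t ht
  have hxne : 1 + γ * t / (1 - α) ≠ 0 := ne_of_gt hx
  have hr1 : (1 + γ * t / (1 - α)) ^ (α - 1)
      = (1 + γ * t / (1 - α)) ^ (α - 2) * (1 + γ * t / (1 - α)) := by
    rw [show α - 1 = (α - 2) + 1 by ring, Real.rpow_add_one hxne]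
  have hr2 : (1 + γ * t / (1 - α)) ^ (α - 2)
      = (1 + γ * t / (1 - α)) ^ (α - 3) * (1 + γ * t / (1 - α)) := by
    rw [show α - 2 = (α - 3) + 1 by ring, Real.rpow_add_one hxne]
  have hm2 : (1 + γ * t / (1 - α)) ^ (-2:ℝ)
      = ((1 + γ * t / (1 - α)) * (1 + γ * t / (1 - α)))⁻¹ := by
    rw [show (-2:ℝ) = ((-2:ℤ):ℝ) by norm_num, Real.rpow_intCast, zpow_neg, zpow_two]
  have h1 : deriv G t + t * deriv (deriv G) t
      = (1 + α * γ * t / (1 - α)) * (1 + γ * t / (1 - α)) ^ (α - 2) := by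
    rw [hderiv1 t hx, hderiv2 t hx, hr1]
    obtain ⟨Y, hYne, hYeq⟩ : ∃ Y : ℝ, Y ≠ 0 ∧ (1 + γ * t / (1 - α)) ^ (α - 2) = Y :=
      ⟨_, ne_of_gt (Real.rpow_pos_of_pos hx _), rfl⟩
    rw [hYeq]
    field_simp
    ring
  have hpos : 0 < deriv G t + t * deriv (deriv G) t := by
    rw [h1]
    have h2 : 0 ≤ α * γ * t / (1 - α) := by positivity
    have h3 : (0:ℝ) < 1 + α * γ * t / (1 - α) := by linarith
    exact mul_pos h3 (Real.rpow_pos_of_pos hx _)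
  have h2 : deriv (deriv G) t / deriv G t
      + t * (deriv (deriv (deriv G)) t / deriv G t
          - (deriv (deriv G) t / deriv G t) ^ 2)
      = -γ * (1 + γ * t / (1 - α)) ^ (-2:ℝ) := by
    rw [hderiv1 t hx, hderiv2 t hx, hderiv3 t hx, hr1, hr2, hm2]
    obtain ⟨Y, hYne, hYeq⟩ : ∃ Y : ℝ, Y ≠ 0 ∧ (1 + γ * t / (1 - α)) ^ (α - 3) = Y :=
      ⟨_, ne_of_gt (Real.rpow_pos_of_pos hx _), rfl⟩
    rw [hYeq]
    field_simp
    ring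
  refine ⟨h1, hpos, h2, ?_⟩
  rw [h2]
  exact mul_nonpos_iff.mpr (Or.inr ⟨by linarith, le_of_lt (Real.rpow_pos_of_pos hx _)⟩)
end

section
/- Let φ be the standard normal density. For every u' > 0, set ξ₀ = π·(1 ∨ u')^{-3/2}/24 (where 1 ∨ u' = max(1, u')). Then for all u ∈ [0, u'] and all ξ ∈ [0, ξ₀], ∫_ℝ e^{-u cos(ξv)} cos(u sin(ξv) - 2ξv) φ(v) dv > 0. -/
/-!
Write `e^{-u cos ξv} = e^{-u} E` with `1 ≤ E ≤ e^{a v²}`, `a = u ξ² / 2`. The phase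
`A = u sin ξv - k ξ v` satisfies `|A| ≤ c |v|` with `c = (u + k) ξ`, so `cos A ≥ 1 - c² v² / 2`;
whatever the sign of `cos A`, this gives `E cos A ≥ 1 - (c² / 2) e^{a v²} v²`. Integrating against
`φ`, the integral is at least `e^{-u} (1 - (c² / 2) ∫ e^{a v²} v² φ) ≥ e^{-u} (1 - 4 c²)`, which is
positive once `a ≤ 1/8` and `c < 1/2`. For `ξ ≤ ξ₀` and `k = 2` one has `c ≤ π / 8`.
-/

open Set MeasureTheory

/-- The standard normal density. -/
noncomputable def stdNormalDens (v : ℝ) : ℝ :=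
  (Real.sqrt (2 * Real.pi))⁻¹ * Real.exp (-v ^ 2 / 2)

open Real ProbabilityTheory

lemma stdNormalDens_eq_gaussianPDFReal : stdNormalDens = gaussianPDFReal 0 1 := by
  ext v
  simp [stdNormalDens, gaussianPDFReal]

lemma stdNormalDens_nonneg (v : ℝ) : 0 ≤ stdNormalDens v := by
  rw [stdNormalDens_eq_gaussianPDFReal]
  exact gaussianPDFReal_nonneg 0 1 v

lemma integrable_stdNormalDens : Integrable stdNormalDens := by
  rw [stdNormalDens_eq_gaussianPDFReal]
  exact integrable_gaussianPDFReal 0 1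

lemma integral_stdNormalDens : ∫ v, stdNormalDens v = 1 := by
  rw [stdNormalDens_eq_gaussianPDFReal]
  exact integral_gaussianPDFReal_eq_one 0 one_ne_zero

lemma continuous_stdNormalDens : Continuous stdNormalDens := by
  unfold stdNormalDens
  fun_prop

section Moment

variable {a : ℝ}

lemma exp_mul_sq_mul_sq_mul_stdNormalDens_le (ha : a ≤ 1 / 8) (v : ℝ) :
    exp (a * v ^ 2) * v ^ 2 * stdNormalDens v ≤
      4 * (√(2 * π))⁻¹ * exp (-(1 / 8) * v ^ 2) := by
  have hv : v ^ 2 ≤ 4 * exp (v ^ 2 / 4) := by nlinarith [add_one_le_exp (v ^ 2 / 4)]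
  have hexp : exp (a * v ^ 2) * exp (-v ^ 2 / 2) ≤ exp (-(3 / 8) * v ^ 2) := by
    rw [← exp_add]
    exact exp_le_exp.2 (by nlinarith [sq_nonneg v])
  calc exp (a * v ^ 2) * v ^ 2 * stdNormalDens v
      = (√(2 * π))⁻¹ * (v ^ 2 * (exp (a * v ^ 2) * exp (-v ^ 2 / 2))) := by
        unfold stdNormalDens; ring
    _ ≤ (√(2 * π))⁻¹ * (4 * exp (v ^ 2 / 4) * exp (-(3 / 8) * v ^ 2)) := by gcongr
    _ = 4 * (√(2 * π))⁻¹ * exp (-(1 / 8) * v ^ 2) := by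
        rw [mul_assoc 4, ← exp_add]; ring_nf

lemma integrable_exp_mul_sq_mul_sq_mul_stdNormalDens (ha : a ≤ 1 / 8) :
    Integrable fun v ↦ exp (a * v ^ 2) * v ^ 2 * stdNormalDens v := by
  have hcont : Continuous fun v ↦ exp (a * v ^ 2) * v ^ 2 * stdNormalDens v := by
    have := continuous_stdNormalDens
    fun_prop
  have hg : Integrable fun v : ℝ ↦ 4 * (√(2 * π))⁻¹ * exp (-(1 / 8) * v ^ 2) :=
    (integrable_exp_neg_mul_sq (by norm_num)).const_mul _
  refine hg.mono' hcont.aestronglyMeasurable (ae_of_all _ fun v ↦ ?_)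
  rw [norm_of_nonneg (by have := stdNormalDens_nonneg v; positivity)]
  exact exp_mul_sq_mul_sq_mul_stdNormalDens_le ha v

lemma integral_exp_mul_sq_mul_sq_mul_stdNormalDens_le (ha : a ≤ 1 / 8) :
    ∫ v, exp (a * v ^ 2) * v ^ 2 * stdNormalDens v ≤ 8 := by
  have hsqrt : √(π / (1 / 8)) = 2 * √(2 * π) := by
    rw [show π / (1 / 8) = 2 ^ 2 * (2 * π) by ring, sqrt_mul (by positivity), sqrt_sq two_pos.le]
  calc ∫ v, exp (a * v ^ 2) * v ^ 2 * stdNormalDens v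
      ≤ ∫ v, 4 * (√(2 * π))⁻¹ * exp (-(1 / 8) * v ^ 2) :=
        integral_mono (integrable_exp_mul_sq_mul_sq_mul_stdNormalDens ha)
          ((integrable_exp_neg_mul_sq (by norm_num)).const_mul _)
          (exp_mul_sq_mul_sq_mul_stdNormalDens_le ha)
    _ = 8 := by
        rw [integral_const_mul, integral_gaussian, hsqrt]
        field_simp
        norm_num

end Moment

-- If `C ≥ 0` then `E C ≥ C ≥ 1 - t`; otherwise `E C ≥ B C ≥ B (1 - t)`.
lemma one_sub_mul_le_mul_of_one_le {E B C t : ℝ} (hE : 1 ≤ E) (hEB : E ≤ B) (hC : 1 - t ≤ C)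
    (ht : 0 ≤ t) : 1 - B * t ≤ E * C := by
  rcases le_total 0 C with hC0 | hC0
  · nlinarith
  · nlinarith

/-- At `γ = -ξ²`, `u = t e^{ξ²/2}`, the `k`-th `t`-derivative of the log-normal frailty
transform is `(-1)^k e^{kξ²/2} ∫ logNormalDerivIntegrand k u ξ v dv`. -/
noncomputable def logNormalDerivIntegrand (k u ξ v : ℝ) : ℝ :=
  exp (-(u * cos (ξ * v))) * cos (u * sin (ξ * v) - k * ξ * v) * stdNormalDens v

section Integrand

variable {k u ξ : ℝ}

lemma abs_mul_sin_sub_mul_le (hk : 0 ≤ k) (hu : 0 ≤ u) (hξ : 0 ≤ ξ) (v : ℝ) :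
    |u * sin (ξ * v) - k * ξ * v| ≤ (u + k) * ξ * |v| :=
  calc |u * sin (ξ * v) - k * ξ * v|
      ≤ u * |sin (ξ * v)| + k * ξ * |v| := by
        refine (abs_sub _ _).trans_eq ?_
        rw [abs_mul, abs_mul, abs_mul, abs_of_nonneg hu, abs_of_nonneg hk, abs_of_nonneg hξ]
    _ ≤ u * |ξ * v| + k * ξ * |v| := by gcongr u * ?_ + _; exact abs_sin_le_abs
    _ = (u + k) * ξ * |v| := by rw [abs_mul, abs_of_nonneg hξ]; ring

lemma one_sub_sq_mul_sq_div_two_le_cos (hk : 0 ≤ k) (hu : 0 ≤ u) (hξ : 0 ≤ ξ) (v : ℝ) :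
    1 - ((u + k) * ξ) ^ 2 / 2 * v ^ 2 ≤ cos (u * sin (ξ * v) - k * ξ * v) := by
  have hsq : (u * sin (ξ * v) - k * ξ * v) ^ 2 ≤ ((u + k) * ξ) ^ 2 * v ^ 2 := by
    rw [← sq_abs (u * sin (ξ * v) - k * ξ * v), ← sq_abs v, ← mul_pow]
    exact pow_le_pow_left₀ (abs_nonneg _) (abs_mul_sin_sub_mul_le hk hu hξ v) 2
  linarith [one_sub_sq_div_two_le_cos (x := u * sin (ξ * v) - k * ξ * v)]

lemma exp_neg_mul_cos_eq (u x : ℝ) :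
    exp (-(u * cos x)) = exp (-u) * exp (u * (1 - cos x)) := by
  rw [← exp_add]; ring_nf

lemma mul_one_sub_cos_le (hu : 0 ≤ u) (ξ v : ℝ) :
    u * (1 - cos (ξ * v)) ≤ u * ξ ^ 2 / 2 * v ^ 2 := by
  have := one_sub_sq_div_two_le_cos (x := ξ * v)
  nlinarith

lemma integrable_logNormalDerivIntegrand (k u ξ : ℝ) :
    Integrable (logNormalDerivIntegrand k u ξ) := by
  have hcont : Continuous (logNormalDerivIntegrand k u ξ) := by
    have := continuous_stdNormalDens
    unfold logNormalDerivIntegrand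
    fun_prop
  refine (integrable_stdNormalDens.const_mul (exp |u|)).mono' hcont.aestronglyMeasurable
    (ae_of_all _ fun v ↦ ?_)
  have hexp : exp (-(u * cos (ξ * v))) ≤ exp |u| := by
    refine exp_le_exp.2 ((neg_le_abs _).trans ?_)
    rw [abs_mul]
    exact mul_le_of_le_one_right (abs_nonneg u) (abs_cos_le_one _)
  rw [logNormalDerivIntegrand, norm_mul, norm_mul, norm_of_nonneg (exp_nonneg _),
    norm_of_nonneg (stdNormalDens_nonneg v)]
  have hcos : ‖cos (u * sin (ξ * v) - k * ξ * v)‖ ≤ 1 := abs_cos_le_one _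
  have hφ := stdNormalDens_nonneg v
  calc exp (-(u * cos (ξ * v))) * ‖cos (u * sin (ξ * v) - k * ξ * v)‖ * stdNormalDens v
      ≤ exp |u| * 1 * stdNormalDens v := by gcongr
    _ = exp |u| * stdNormalDens v := by ring

lemma exp_neg_mul_sub_le_logNormalDerivIntegrand (hk : 0 ≤ k) (hu : 0 ≤ u) (hξ : 0 ≤ ξ)
    (v : ℝ) :
    exp (-u) * (stdNormalDens v -
        ((u + k) * ξ) ^ 2 / 2 * (exp (u * ξ ^ 2 / 2 * v ^ 2) * v ^ 2 * stdNormalDens v)) ≤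
      logNormalDerivIntegrand k u ξ v := by
  have key := one_sub_mul_le_mul_of_one_le
    (one_le_exp (mul_nonneg hu (sub_nonneg.2 (cos_le_one (ξ * v)))))
    (exp_le_exp.2 (mul_one_sub_cos_le hu ξ v))
    (one_sub_sq_mul_sq_div_two_le_cos hk hu hξ v) (by positivity)
  have hφ := stdNormalDens_nonneg v
  rw [logNormalDerivIntegrand, exp_neg_mul_cos_eq]
  calc exp (-u) * (stdNormalDens v -
        ((u + k) * ξ) ^ 2 / 2 * (exp (u * ξ ^ 2 / 2 * v ^ 2) * v ^ 2 * stdNormalDens v))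
      = exp (-u) * ((1 - exp (u * ξ ^ 2 / 2 * v ^ 2) * (((u + k) * ξ) ^ 2 / 2 * v ^ 2)) *
          stdNormalDens v) := by ring
    _ ≤ exp (-u) * ((exp (u * (1 - cos (ξ * v))) * cos (u * sin (ξ * v) - k * ξ * v)) *
          stdNormalDens v) := by gcongr
    _ = _ := by ring

end Integrand

theorem integral_logNormalDerivIntegrand_pos {k u ξ : ℝ} (hk : 0 ≤ k) (hu : 0 ≤ u)
    (hξ : 0 ≤ ξ) (hc : (u + k) * ξ < 1 / 2) (ha : u * ξ ^ 2 ≤ 1 / 4) :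
    0 < ∫ v, logNormalDerivIntegrand k u ξ v := by
  set c := (u + k) * ξ
  have hc0 : 0 ≤ c := by positivity
  have ha' : u * ξ ^ 2 / 2 ≤ 1 / 8 := by linarith
  have hh := integrable_exp_mul_sq_mul_sq_mul_stdNormalDens ha'
  have hI := integral_exp_mul_sq_mul_sq_mul_stdNormalDens_le ha'
  have hlower := (integrable_stdNormalDens.sub (hh.const_mul (c ^ 2 / 2))).const_mul (exp (-u))
  calc 0 < exp (-u) *
        (1 - c ^ 2 / 2 * ∫ v, exp (u * ξ ^ 2 / 2 * v ^ 2) * v ^ 2 * stdNormalDens v) :=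
        mul_pos (exp_pos _) (by nlinarith)
    _ = ∫ v, exp (-u) * (stdNormalDens v -
          c ^ 2 / 2 * (exp (u * ξ ^ 2 / 2 * v ^ 2) * v ^ 2 * stdNormalDens v)) := by
        rw [integral_const_mul, integral_sub integrable_stdNormalDens (hh.const_mul _),
          integral_const_mul, integral_stdNormalDens]
    _ ≤ ∫ v, logNormalDerivIntegrand k u ξ v :=
        integral_mono hlower (integrable_logNormalDerivIntegrand k u ξ)
          (exp_neg_mul_sub_le_logNormalDerivIntegrand hk hu hξ)

lemma add_two_mul_le_pi_div_eight {u u' ξ : ℝ} (hu : u ≤ u') (hξ : 0 ≤ ξ)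
    (hξ' : ξ ≤ π * (max 1 u') ^ (-(3 / 2) : ℝ) / 24) : (u + 2) * ξ ≤ π / 8 := by
  set M := max 1 u'
  have hM : 1 ≤ M := le_max_left _ _
  have hM' : M ^ (-(3 / 2) : ℝ) ≤ M⁻¹ := by
    rw [← rpow_neg_one]
    exact rpow_le_rpow_of_exponent_le hM (by norm_num)
  calc (u + 2) * ξ ≤ 3 * M * (π * M⁻¹ / 24) := by
        gcongr
        · linarith [le_max_right 1 u']
        · exact hξ'.trans (by gcongr)
    _ = π / 8 := by field_simp; ring

theorem stmt_10_general (u' : ℝ) (u ξ : ℝ)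
    (hu : u ∈ Icc 0 u')
    (hξ : ξ ∈ Icc 0 (Real.pi * (max 1 u') ^ (-(3/2) : ℝ) / 24)) :
    0 < ∫ v : ℝ, Real.exp (-(u * Real.cos (ξ * v))) *
        Real.cos (u * Real.sin (ξ * v) - 2 * ξ * v) * stdNormalDens v := by
  obtain ⟨hu, hu'⟩ := hu
  obtain ⟨hξ, hξ'⟩ := hξ
  have hc := add_two_mul_le_pi_div_eight hu' hξ hξ'
  have hπ := pi_lt_four
  have hξπ : ξ ≤ π / 16 := by nlinarith
  exact integral_logNormalDerivIntegrand_pos two_pos.le hu hξ (by linarith)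
    (by nlinarith [mul_le_mul hc hξπ hξ (by positivity)])

/-- for every `u' > 0`, with `ξ₀ = π (1 ∨ u')^{-3/2}/24`, the real-integral
representation of the second `t`-derivative of the extended log-normal frailty transform is
positive: for all `u ∈ [0, u']` and `ξ ∈ [0, ξ₀]`,
`∫ e^{-u cos(ξv)} cos(u sin(ξv) - 2ξv) φ(v) dv > 0`. -/
theorem stmt_10 (u' : ℝ) (hu' : 0 < u') (u ξ : ℝ)
    (hu : u ∈ Icc 0 u')
    (hξ : ξ ∈ Icc 0 (Real.pi * (max 1 u') ^ (-(3/2) : ℝ) / 24)) :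
    0 < ∫ v : ℝ, Real.exp (-(u * Real.cos (ξ * v))) *
        Real.cos (u * Real.sin (ξ * v) - 2 * ξ * v) * stdNormalDens v :=
  stmt_10_general u' u ξ hu hξ
end

section
/- Fix t ≥ 0. Let (W_n) be a sequence of nonnegative random variables with E[W_n] = 1 for all n, and suppose v_n := E[(W_n - 1)^2] satisfies 0 < v_n < ∞, v_n → 0, and E[|W_n - 1|^3]/v_n → 0 as n → ∞. Then (E[W_n e^{-t W_n}] - E[e^{-t W_n}]) / (v_n · E[e^{-t W_n}]) → -t as n → ∞. -/
open Set Filter MeasureTheory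

/-- Lipschitz: for a,b ≥ 0, |e^{-a} - e^{-b}| ≤ |a - b|. -/
lemma exp_lip (a b : ℝ) (ha : 0 ≤ a) (hb : 0 ≤ b) :
    |Real.exp (-a) - Real.exp (-b)| ≤ |a - b| := by
  wlog h : b ≤ a generalizing a b
  · rw [abs_sub_comm, abs_sub_comm a b]; exact this b a hb ha (le_of_not_ge h)
  have h1 : Real.exp (-a) ≤ Real.exp (-b) := Real.exp_le_exp.mpr (by linarith)
  rw [abs_of_nonpos (by linarith), abs_of_nonneg (by linarith)]
  have hc : Real.exp (-b) ≤ 1 := Real.exp_le_one_iff.mpr (by linarith)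
  have hd : 1 - (a - b) ≤ Real.exp (-(a - b)) := by
    have := Real.add_one_le_exp (-(a - b)); linarith
  have he : Real.exp (-b) * Real.exp (-(a - b)) = Real.exp (-a) := by
    rw [← Real.exp_add]; ring_nf
  nlinarith [Real.exp_pos (-b), Real.exp_pos (-(a-b))]

/-- Second-order Taylor bound: for s ≥ -t, |e^{-s} - 1 + s| ≤ s² e^t. -/
lemma exp_quad {t s : ℝ} (ht : 0 ≤ t) (hs : -t ≤ s) :
    |Real.exp (-s) - 1 + s| ≤ s ^ 2 * Real.exp t := by
  have h0 : 0 ≤ Real.exp (-s) - 1 + s := by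
    have := Real.add_one_le_exp (-s); linarith
  rw [abs_of_nonneg h0]
  have h1 : Real.exp (-s) * Real.exp s = 1 := by rw [← Real.exp_add]; simp
  have h2 : 1 + s ≤ Real.exp s := by have := Real.add_one_le_exp s; linarith
  have h3 : (0:ℝ) < Real.exp (-s) := Real.exp_pos _
  have h5 : (1:ℝ) ≤ Real.exp t := Real.one_le_exp ht
  rcases le_or_gt 0 s with h | h
  · have h4 : 1 - s ≤ Real.exp (-s) := by have := Real.add_one_le_exp (-s); linarith
    -- e^{-s}(1+s) ≤ 1 ⇒ e^{-s}-1+s ≤ s(1-e^{-s}) ≤ s·s ≤ s² e^t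
    nlinarith [sq_nonneg s, mul_le_mul_of_nonneg_left h2 h3.le]
  · have h6 : Real.exp (-s) ≤ Real.exp t := Real.exp_le_exp.mpr (by linarith)
    -- e^{-s}(1+s) ≤ 1, 1-s > 0 ⇒ e^{-s}(1-s²) ≤ 1-s ⇒ e^{-s}-1+s ≤ s²e^{-s} ≤ s²e^t
    nlinarith [mul_le_mul_of_nonneg_left h2 h3.le, sq_nonneg s,
      mul_le_mul_of_nonneg_left h6 (sq_nonneg s)]

/-- Cubic pointwise bound. -/
lemma cubic_bound (t w : ℝ) (ht : 0 ≤ t) (hw : 0 ≤ w) :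
    |(w - 1) * Real.exp (-(t * w)) - Real.exp (-t) * ((w - 1) - t * (w - 1) ^ 2)|
      ≤ t ^ 2 * |w - 1| ^ 3 := by
  have hs : -t ≤ t * (w - 1) := by nlinarith
  have hfact : Real.exp (-(t * w)) = Real.exp (-t) * Real.exp (-(t * (w - 1))) := by
    rw [← Real.exp_add]; ring_nf
  have heq : (w - 1) * Real.exp (-(t * w)) - Real.exp (-t) * ((w - 1) - t * (w - 1) ^ 2)
      = Real.exp (-t) * ((w - 1) * (Real.exp (-(t * (w - 1))) - 1 + t * (w - 1))) := by
    rw [hfact]; ring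
  rw [heq, abs_mul, abs_mul, Real.abs_exp]
  have hq := exp_quad ht hs
  calc Real.exp (-t) * (|w - 1| * |Real.exp (-(t * (w - 1))) - 1 + t * (w - 1)|)
      ≤ Real.exp (-t) * (|w - 1| * ((t * (w - 1)) ^ 2 * Real.exp t)) := by
        gcongr
    _ = (Real.exp (-t) * Real.exp t) * (t ^ 2 * (|w - 1| * |w - 1| ^ 2)) := by
        rw [mul_pow, ← sq_abs (w - 1)]; ring
    _ = 1 * (t ^ 2 * (|w - 1| * |w - 1| ^ 2)) := by
        rw [← Real.exp_add, neg_add_cancel, Real.exp_zero]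
    _ = t ^ 2 * |w - 1| ^ 3 := by ring

/-- first limit in the proof of Proposition 7. Fix `t ≥ 0`. If `W_n ≥ 0`,
`E[W_n] = 1`, `v_n = E[(W_n - 1)²]` with `0 < v_n < ∞`, `v_n → 0` and
`E[|W_n - 1|³]/v_n → 0`, then
`(E[W_n e^{-t W_n}] - E[e^{-t W_n}]) / (v_n E[e^{-t W_n}]) → -t`. -/
theorem stmt_13 {Ω : Type*} [MeasureSpace Ω] [IsProbabilityMeasure (volume : Measure Ω)]
    (t : ℝ) (ht : 0 ≤ t) (W : ℕ → Ω → ℝ) (v : ℕ → ℝ)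
    (hWm : ∀ n, Measurable (W n))
    (hW0 : ∀ n, ∀ ω, 0 ≤ W n ω)
    (hW1 : ∀ n, Integrable (W n) (volume : Measure Ω))
    (hmean : ∀ n, ∫ ω, W n ω = 1)
    (hint2 : ∀ n, Integrable (fun ω => (W n ω - 1) ^ 2) (volume : Measure Ω))
    (hint3 : ∀ n, Integrable (fun ω => |W n ω - 1| ^ 3) (volume : Measure Ω))
    (hv : ∀ n, v n = ∫ ω, (W n ω - 1) ^ 2)
    (hvpos : ∀ n, 0 < v n)
    (hv0 : Tendsto v atTop (nhds 0))
    (h3 : Tendsto (fun n => (∫ ω, |W n ω - 1| ^ 3) / v n) atTop (nhds 0)) :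
    Tendsto (fun n =>
        ((∫ ω, W n ω * Real.exp (-(t * W n ω))) - ∫ ω, Real.exp (-(t * W n ω)))
          / (v n * ∫ ω, Real.exp (-(t * W n ω))))
      atTop (nhds (-t)) := by
  have hXint : ∀ n, Integrable (fun ω => W n ω - 1) volume :=
    fun n => (hW1 n).sub (integrable_const 1)
  have hXabs : ∀ n, Integrable (fun ω => |W n ω - 1|) volume := fun n => (hXint n).abs
  have hXmean : ∀ n, ∫ ω, (W n ω - 1) = 0 := by
    intro n
    rw [integral_sub (hW1 n) (integrable_const 1), hmean n]
    simp
  -- integrability of the exponential terms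
  have hDm : ∀ n, Measurable (fun ω => Real.exp (-(t * W n ω))) :=
    fun n => Real.measurable_exp.comp ((hWm n).const_mul t).neg
  have hDint : ∀ n, Integrable (fun ω => Real.exp (-(t * W n ω))) volume := by
    intro n
    refine (integrable_const (1:ℝ)).mono' (hDm n).aestronglyMeasurable (ae_of_all _ fun ω => ?_)
    rw [Real.norm_eq_abs, Real.abs_exp]
    exact Real.exp_le_one_iff.mpr (by nlinarith [hW0 n ω])
  have hN2int : ∀ n, Integrable (fun ω => W n ω * Real.exp (-(t * W n ω))) volume := by
    intro n
    refine (hW1 n).mono' (((hWm n).mul (hDm n)).aestronglyMeasurable) (ae_of_all _ fun ω => ?_)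
    rw [Real.norm_eq_abs, abs_mul, Real.abs_exp, abs_of_nonneg (hW0 n ω)]
    have h1 : Real.exp (-(t * W n ω)) ≤ 1 := Real.exp_le_one_iff.mpr (by nlinarith [hW0 n ω])
    have := hW0 n ω
    nlinarith [Real.exp_pos (-(t * W n ω))]
  have hNint : ∀ n, Integrable (fun ω => (W n ω - 1) * Real.exp (-(t * W n ω))) volume := by
    intro n
    have := (hN2int n).sub (hDint n)
    refine this.congr (ae_of_all _ fun ω => ?_)
    simp only [Pi.sub_apply]
    ring
  set N : ℕ → ℝ := fun n => ∫ ω, (W n ω - 1) * Real.exp (-(t * W n ω)) with hN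
  set D : ℕ → ℝ := fun n => ∫ ω, Real.exp (-(t * W n ω)) with hD
  have hNdef : ∀ n, (∫ ω, W n ω * Real.exp (-(t * W n ω))) - ∫ ω, Real.exp (-(t * W n ω)) = N n := by
    intro n
    rw [hN, ← integral_sub (hN2int n) (hDint n)]
    congr 1; funext ω; ring
  -- bound on E|X|
  have habs_le : ∀ n, (∫ ω, |W n ω - 1|) ≤ 2 * Real.sqrt (v n) := by
    intro n
    have hsq : 0 < Real.sqrt (v n) := Real.sqrt_pos.mpr (hvpos n)
    have hmul : Real.sqrt (v n) * Real.sqrt (v n) = v n := Real.mul_self_sqrt (hvpos n).le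
    have hpt : ∀ ω, |W n ω - 1| ≤ Real.sqrt (v n) + (W n ω - 1) ^ 2 / Real.sqrt (v n) := by
      intro ω
      have key : |W n ω - 1| - Real.sqrt (v n) ≤ (W n ω - 1) ^ 2 / Real.sqrt (v n) := by
        rw [le_div_iff₀ hsq]
        nlinarith [sq_nonneg (Real.sqrt (v n) - |W n ω - 1|), sq_abs (W n ω - 1)]
      linarith
    have hRint : Integrable (fun ω => Real.sqrt (v n) + (W n ω - 1) ^ 2 / Real.sqrt (v n)) volume :=
      (integrable_const _).add ((hint2 n).div_const _)
    calc (∫ ω, |W n ω - 1|) ≤ ∫ ω, (Real.sqrt (v n) + (W n ω - 1) ^ 2 / Real.sqrt (v n)) :=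
          integral_mono (hXabs n) hRint hpt
      _ = Real.sqrt (v n) + (∫ ω, (W n ω - 1) ^ 2) / Real.sqrt (v n) := by
          rw [integral_add (integrable_const _) ((hint2 n).div_const _), integral_const,
            integral_div]
          simp
      _ = 2 * Real.sqrt (v n) := by
          rw [← hv n, Real.div_sqrt]; ring
  -- limit of D
  have hDlim : Tendsto D atTop (nhds (Real.exp (-t))) := by
    have hb : ∀ n, ‖D n - Real.exp (-t)‖ ≤ t * (2 * Real.sqrt (v n)) := by
      intro n
      have h1 : D n - Real.exp (-t) = ∫ ω, (Real.exp (-(t * W n ω)) - Real.exp (-t)) := by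
        rw [hD, integral_sub (hDint n) (integrable_const _), integral_const]
        simp
      rw [h1]
      calc ‖∫ ω, (Real.exp (-(t * W n ω)) - Real.exp (-t))‖
          ≤ ∫ ω, ‖Real.exp (-(t * W n ω)) - Real.exp (-t)‖ := norm_integral_le_integral_norm _
        _ ≤ ∫ ω, t * |W n ω - 1| := by
            refine integral_mono (((hDint n).sub (integrable_const _)).norm)
              ((hXabs n).const_mul t) (fun ω => ?_)
            rw [Real.norm_eq_abs]
            have := exp_lip (t * W n ω) t (by nlinarith [hW0 n ω]) ht
            calc |Real.exp (-(t * W n ω)) - Real.exp (-t)| ≤ |t * W n ω - t| := this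
              _ = t * |W n ω - 1| := by rw [← abs_of_nonneg ht, ← abs_mul, abs_of_nonneg ht]; ring_nf
        _ = t * ∫ ω, |W n ω - 1| := integral_const_mul _ _
        _ ≤ t * (2 * Real.sqrt (v n)) := by
            have := habs_le n
            nlinarith [ht]
    have hg : Tendsto (fun n => t * (2 * Real.sqrt (v n))) atTop (nhds 0) := by
      have hsqrt : Tendsto (fun n => Real.sqrt (v n)) atTop (nhds 0) := by
        have := (Real.continuous_sqrt.tendsto 0).comp hv0
        simpa [Function.comp_def] using this
      have := (hsqrt.const_mul 2).const_mul t
      simpa using this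
    have h0 : Tendsto (fun n => D n - Real.exp (-t)) atTop (nhds 0) :=
      squeeze_zero_norm hb hg
    have := h0.add_const (Real.exp (-t))
    simpa using this
  -- bound on N
  have hNb : ∀ n, |N n - (-(t * Real.exp (-t)) * v n)| ≤ t ^ 2 * ∫ ω, |W n ω - 1| ^ 3 := by
    intro n
    have hgint : Integrable (fun ω => Real.exp (-t) * ((W n ω - 1) - t * (W n ω - 1) ^ 2)) volume :=
      ((hXint n).sub ((hint2 n).const_mul t)).const_mul _
    have hgval : (∫ ω, Real.exp (-t) * ((W n ω - 1) - t * (W n ω - 1) ^ 2))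
        = -(t * Real.exp (-t)) * v n := by
      rw [integral_const_mul, integral_sub (hXint n) ((hint2 n).const_mul t),
        integral_const_mul, hXmean n, ← hv n]
      ring
    rw [← hgval, ← integral_sub (hNint n) hgint]
    calc |∫ ω, ((W n ω - 1) * Real.exp (-(t * W n ω))
            - Real.exp (-t) * ((W n ω - 1) - t * (W n ω - 1) ^ 2))|
        ≤ ∫ ω, ‖(W n ω - 1) * Real.exp (-(t * W n ω))
            - Real.exp (-t) * ((W n ω - 1) - t * (W n ω - 1) ^ 2)‖ := by
          rw [← Real.norm_eq_abs]; exact norm_integral_le_integral_norm _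
      _ ≤ ∫ ω, t ^ 2 * |W n ω - 1| ^ 3 := by
          refine integral_mono (((hNint n).sub hgint).norm) ((hint3 n).const_mul _)
            (fun ω => ?_)
          rw [Real.norm_eq_abs]
          exact cubic_bound t (W n ω) ht (hW0 n ω)
      _ = t ^ 2 * ∫ ω, |W n ω - 1| ^ 3 := integral_const_mul _ _
  -- limit of N/v
  have hNv : Tendsto (fun n => N n / v n) atTop (nhds (-(t * Real.exp (-t)))) := by
    have hb : ∀ n, ‖N n / v n - (-(t * Real.exp (-t)))‖
        ≤ t ^ 2 * ((∫ ω, |W n ω - 1| ^ 3) / v n) := by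
      intro n
      have hvne : v n ≠ 0 := (hvpos n).ne'
      have heq : N n / v n - (-(t * Real.exp (-t)))
          = (N n - (-(t * Real.exp (-t)) * v n)) / v n := by field_simp
      rw [heq, Real.norm_eq_abs, abs_div, abs_of_pos (hvpos n), ← mul_div_assoc]
      exact (div_le_div_iff_of_pos_right (hvpos n)).mpr (hNb n)
    have hg : Tendsto (fun n => t ^ 2 * ((∫ ω, |W n ω - 1| ^ 3) / v n)) atTop (nhds 0) := by
      have := h3.const_mul (t ^ 2)
      simpa using this
    have h0 := squeeze_zero_norm hb hg
    have := h0.add_const (-(t * Real.exp (-t)))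
    simpa using this
  -- combine
  have hfin := hNv.div hDlim (Real.exp_ne_zero (-t))
  have hval : -(t * Real.exp (-t)) / Real.exp (-t) = -t := by
    field_simp
  rw [hval] at hfin
  refine hfin.congr (fun n => ?_)
  show N n / v n / D n = _
  rw [div_div, ← hNdef n]
end

section
/- Fix t ≥ 0. Let (W_n) be a sequence of nonnegative random variables with E[W_n] = 1 for all n, and suppose v_n := E[(W_n - 1)^2] satisfies 0 < v_n < ∞, v_n → 0, and E[|W_n - 1|^3]/v_n → 0 as n → ∞. Then (-log E[e^{-t W_n}] - t)/v_n → -t²/2 as n → ∞. -/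
open Set Filter MeasureTheory

lemma mono_from_zero {f f' : ℝ → ℝ} (hd : ∀ x, HasDerivAt f (f' x) x)
    (h' : ∀ x, 0 ≤ x → 0 ≤ f' x) {x : ℝ} (hx : 0 ≤ x) : f 0 ≤ f x := by
  have hdiff : Differentiable ℝ f := fun y => (hd y).differentiableAt
  have hm : MonotoneOn f (Ici (0:ℝ)) := by
    apply monotoneOn_of_deriv_nonneg (convex_Ici 0) hdiff.continuous.continuousOn
      (fun y _ => (hdiff y).differentiableWithinAt)
    intro y hy
    rw [(hd y).deriv]
    exact h' y (le_of_lt (by simpa using hy))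
  exact hm (mem_Ici.2 le_rfl) (mem_Ici.2 hx) hx

lemma anti_to_zero {f f' : ℝ → ℝ} (hd : ∀ x, HasDerivAt f (f' x) x)
    (h' : ∀ x, x ≤ 0 → f' x ≤ 0) {x : ℝ} (hx : x ≤ 0) : f 0 ≤ f x := by
  have hdiff : Differentiable ℝ f := fun y => (hd y).differentiableAt
  have hm : AntitoneOn f (Iic (0:ℝ)) := by
    apply antitoneOn_of_deriv_nonpos (convex_Iic 0) hdiff.continuous.continuousOn
      (fun y _ => (hdiff y).differentiableWithinAt)
    intro y hy
    rw [(hd y).deriv]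
    exact h' y (le_of_lt (by simpa using hy))
  exact hm (mem_Iic.2 hx) (mem_Iic.2 le_rfl) hx

lemma quad_deriv : ∀ y : ℝ, HasDerivAt (fun z => Real.exp z - 1 - z - z^2/2)
    (Real.exp y - 1 - y) y := by
  intro y
  have h : HasDerivAt (fun z : ℝ => Real.exp z - 1 - z - z^2/2)
      (Real.exp y - 0 - 1 - (↑2 * y^(2-1))/2) y :=
    (((Real.hasDerivAt_exp y).sub (hasDerivAt_const y 1)).sub (hasDerivAt_id y)).sub
      ((hasDerivAt_pow 2 y).div_const 2)
  convert h using 1; push_cast; ring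

lemma mono_to_zero {f f' : ℝ → ℝ} (hd : ∀ x, HasDerivAt f (f' x) x)
    (h' : ∀ x, x ≤ 0 → 0 ≤ f' x) {x : ℝ} (hx : x ≤ 0) : f x ≤ f 0 := by
  have hdiff : Differentiable ℝ f := fun y => (hd y).differentiableAt
  have hm : MonotoneOn f (Iic (0:ℝ)) := by
    apply monotoneOn_of_deriv_nonneg (convex_Iic 0) hdiff.continuous.continuousOn
      (fun y _ => (hdiff y).differentiableWithinAt)
    intro y hy
    rw [(hd y).deriv]
    exact h' y (le_of_lt (by simpa using hy))
  exact hm (mem_Iic.2 hx) (mem_Iic.2 le_rfl) hx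

/-- exp x ≤ 1+x+x²/2 for x ≤ 0 -/
lemma exp_quad_le {x : ℝ} (hx : x ≤ 0) : Real.exp x ≤ 1 + x + x^2/2 := by
  have := mono_to_zero quad_deriv
    (fun y _ => by nlinarith [Real.add_one_le_exp y]) hx
  simp only [Real.exp_zero] at this
  nlinarith

/-- 1+x+x²/2 ≤ exp x for x ≥ 0 -/
lemma exp_quad_ge {x : ℝ} (hx : 0 ≤ x) : 1 + x + x^2/2 ≤ Real.exp x := by
  have := mono_from_zero quad_deriv
    (fun y _ => by nlinarith [Real.add_one_le_exp y]) hx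
  simp only [Real.exp_zero] at this
  nlinarith

lemma exp_cubic_le (x : ℝ) : 1 + x + x^2/2 + x^3/6 ≤ Real.exp x := by
  have hd : ∀ y : ℝ, HasDerivAt (fun z => Real.exp z - 1 - z - z^2/2 - z^3/6)
      (Real.exp y - 1 - y - y^2/2) y := by
    intro y
    have h : HasDerivAt (fun z : ℝ => Real.exp z - 1 - z - z^2/2 - z^3/6)
        ((Real.exp y - 1 - y) - (↑3 * y^(3-1))/6) y :=
      (quad_deriv y).sub ((hasDerivAt_pow 3 y).div_const 6)
    convert h using 1; push_cast; ring
  rcases le_or_gt x 0 with hx | hx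
  · have := anti_to_zero hd (fun y hy => by nlinarith [exp_quad_le hy]) hx
    simp only [Real.exp_zero] at this
    nlinarith
  · have := mono_from_zero hd (fun y hy => by nlinarith [exp_quad_ge hy]) hx.le
    simp only [Real.exp_zero] at this
    nlinarith

/-- for x ≥ 0: exp x ≤ 1 + x * exp x -/
lemma exp_lin_ub {x : ℝ} (hx : 0 ≤ x) : Real.exp x ≤ 1 + x * Real.exp x := by
  have hd : ∀ y : ℝ, HasDerivAt (fun z => 1 + z * Real.exp z - Real.exp z)
      (y * Real.exp y) y := by
    intro y
    have h : HasDerivAt (fun z : ℝ => 1 + z * Real.exp z - Real.exp z)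
        (0 + (1 * Real.exp y + y * Real.exp y) - Real.exp y) y :=
      ((hasDerivAt_const y 1).add ((hasDerivAt_id y).mul (Real.hasDerivAt_exp y))).sub
        (Real.hasDerivAt_exp y)
    convert h using 1; ring
  have := mono_from_zero hd (fun y hy => mul_nonneg hy (Real.exp_pos y).le) hx
  simp only [Real.exp_zero] at this
  nlinarith

/-- for x ≥ 0: exp x ≤ 1 + x + (x²/2) exp x -/
lemma exp_quad_ub {x : ℝ} (hx : 0 ≤ x) : Real.exp x ≤ 1 + x + x^2/2 * Real.exp x := by
  have hd : ∀ y : ℝ, HasDerivAt (fun z => 1 + z + z^2/2 * Real.exp z - Real.exp z)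
      (1 + (y + y^2/2) * Real.exp y - Real.exp y) y := by
    intro y
    have h : HasDerivAt (fun z : ℝ => 1 + z + z^2/2 * Real.exp z - Real.exp z)
        (0 + 1 + ((↑2 * y^(2-1))/2 * Real.exp y + y^2/2 * Real.exp y) - Real.exp y) y :=
      (((hasDerivAt_const y 1).add (hasDerivAt_id y)).add
        (((hasDerivAt_pow 2 y).div_const 2).mul (Real.hasDerivAt_exp y))).sub
        (Real.hasDerivAt_exp y)
    convert h using 1; push_cast; ring
  have := mono_from_zero hd (fun y hy => by nlinarith [exp_lin_ub hy, Real.exp_pos y]) hx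
  simp only [Real.exp_zero] at this
  nlinarith

/-- for x ≥ 0: exp x ≤ 1 + x + x²/2 + (x³/6) exp x -/
lemma exp_cubic_ub {x : ℝ} (hx : 0 ≤ x) :
    Real.exp x ≤ 1 + x + x^2/2 + x^3/6 * Real.exp x := by
  have hd : ∀ y : ℝ, HasDerivAt (fun z => 1 + z + z^2/2 + z^3/6 * Real.exp z - Real.exp z)
      (1 + y + (y^2/2 + y^3/6) * Real.exp y - Real.exp y) y := by
    intro y
    have h : HasDerivAt (fun z : ℝ => 1 + z + z^2/2 + z^3/6 * Real.exp z - Real.exp z)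
        (0 + 1 + (↑2 * y^(2-1))/2 + ((↑3 * y^(3-1))/6 * Real.exp y + y^3/6 * Real.exp y)
          - Real.exp y) y :=
      ((((hasDerivAt_const y 1).add (hasDerivAt_id y)).add
        ((hasDerivAt_pow 2 y).div_const 2)).add
        (((hasDerivAt_pow 3 y).div_const 6).mul (Real.hasDerivAt_exp y))).sub
        (Real.hasDerivAt_exp y)
    convert h using 1; push_cast; ring
  have := mono_from_zero hd
    (fun y hy => by nlinarith [exp_quad_ub hy, Real.exp_pos y, pow_nonneg hy 3]) hx
  simp only [Real.exp_zero] at this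
  nlinarith

/-- Main Taylor bound: for x ≤ c with 0 ≤ c: |exp x - 1 - x - x²/2| ≤ |x|³/6 * exp c -/
lemma exp_taylor_bound {x c : ℝ} (hc : 0 ≤ c) (hx : x ≤ c) :
    |Real.exp x - (1 + x + x^2/2)| ≤ |x|^3/6 * Real.exp c := by
  have hec : (1:ℝ) ≤ Real.exp c := Real.one_le_exp hc
  rw [abs_le]
  constructor
  · -- lower: exp x - (1+x+x²/2) ≥ x³/6 ≥ -|x|³/6 ≥ -|x|³/6 * exp c
    have h1 := exp_cubic_le x
    have h2 : -(|x|^3) ≤ x^3 := by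
      rcases abs_cases x with ⟨h, h0⟩ | ⟨h, h0⟩
      · rw [h]; nlinarith
      · rw [h]; ring_nf
        exact le_rfl
    have h3 : |x|^3/6 ≤ |x|^3/6 * Real.exp c := le_mul_of_one_le_right (by positivity) hec
    nlinarith
  · rcases le_or_gt x 0 with hx0 | hx0
    · have := exp_quad_le hx0
      have : Real.exp x - (1 + x + x^2/2) ≤ 0 := by linarith
      have hpos : 0 ≤ |x|^3/6 * Real.exp c := by positivity
      linarith
    · have h1 := exp_cubic_ub hx0.le
      have hax : |x| = x := abs_of_pos hx0
      have h2 : Real.exp x ≤ Real.exp c := Real.exp_le_exp.2 hx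
      have : x^3/6 * Real.exp x ≤ |x|^3/6 * Real.exp c := by
        rw [hax]
        exact mul_le_mul le_rfl h2 (Real.exp_pos x).le (by positivity)
      linarith


set_option maxHeartbeats 1000000 in
/-- second limit in the proof of Proposition 7. Fix `t ≥ 0`. If `W_n ≥ 0`,
`E[W_n] = 1`, `v_n = E[(W_n - 1)²]` with `0 < v_n < ∞`, `v_n → 0` and
`E[|W_n - 1|³]/v_n → 0`, then `(-log E[e^{-t W_n}] - t)/v_n → -t²/2`. -/
theorem stmt_14 {Ω : Type*} [MeasureSpace Ω] [IsProbabilityMeasure (volume : Measure Ω)]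
    (t : ℝ) (ht : 0 ≤ t) (W : ℕ → Ω → ℝ) (v : ℕ → ℝ)
    (hWm : ∀ n, Measurable (W n))
    (hW0 : ∀ n, ∀ ω, 0 ≤ W n ω)
    (hW1 : ∀ n, Integrable (W n) (volume : Measure Ω))
    (hmean : ∀ n, ∫ ω, W n ω = 1)
    (hint2 : ∀ n, Integrable (fun ω => (W n ω - 1) ^ 2) (volume : Measure Ω))
    (hint3 : ∀ n, Integrable (fun ω => |W n ω - 1| ^ 3) (volume : Measure Ω))
    (hv : ∀ n, v n = ∫ ω, (W n ω - 1) ^ 2)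
    (hvpos : ∀ n, 0 < v n)
    (hv0 : Tendsto v atTop (nhds 0))
    (h3 : Tendsto (fun n => (∫ ω, |W n ω - 1| ^ 3) / v n) atTop (nhds 0)) :
    Tendsto (fun n =>
        ((-Real.log (∫ ω, Real.exp (-(t * W n ω)))) - t) / v n)
      atTop (nhds (-t ^ 2 / 2)) := by
  set X : ℕ → Ω → ℝ := fun n ω => W n ω - 1 with hX
  have hXm : ∀ n, Measurable (X n) := fun n => (hWm n).sub measurable_const
  have hXint : ∀ n, Integrable (X n) := fun n => (hW1 n).sub (integrable_const 1)
  have hXmean : ∀ n, ∫ ω, X n ω = 0 := by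
    intro n
    have : ∫ ω, X n ω = (∫ ω, W n ω) - ∫ _ : Ω, (1:ℝ) :=
      integral_sub (hW1 n) (integrable_const 1)
    simp [this, hmean n]
  have hXlb : ∀ n ω, -1 ≤ X n ω := fun n ω => by
    have := hW0 n ω; simp only [hX]; linarith
  set g : ℕ → Ω → ℝ := fun n ω => Real.exp (-(t * X n ω)) with hg
  have hgm : ∀ n, Measurable (g n) :=
    fun n => Real.measurable_exp.comp (((hXm n).const_mul t).neg)
  have hgub : ∀ n ω, g n ω ≤ Real.exp t := by
    intro n ω
    apply Real.exp_le_exp.2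
    have h1 : -t ≤ t * X n ω := by nlinarith [hXlb n ω]
    linarith
  have hgint : ∀ n, Integrable (g n) := by
    intro n
    refine Integrable.mono' (integrable_const (Real.exp t)) (hgm n).aestronglyMeasurable ?_
    filter_upwards with ω
    rw [Real.norm_eq_abs, abs_of_pos (Real.exp_pos _)]
    exact hgub n ω
  set A : ℕ → ℝ := fun n => ∫ ω, g n ω with hA
  set u : ℕ → ℝ := fun n => A n - 1 with hu
  set m3 : ℕ → ℝ := fun n => ∫ ω, |X n ω| ^ 3 with hm3
  set C : ℝ := t ^ 3 * Real.exp t / 6 with hC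
  have hXint3 : ∀ n, Integrable (fun ω => |X n ω| ^ 3) := fun n => hint3 n
  have hXint2 : ∀ n, Integrable (fun ω => X n ω ^ 2) := fun n => hint2 n
  -- key Taylor estimate: |u n - t²/2 v n| ≤ C * m3 n
  have hkey : ∀ n, |u n - t ^ 2 / 2 * v n| ≤ C * m3 n := by
    intro n
    have hi1 : Integrable (fun ω : Ω => -(t * X n ω)) := ((hXint n).const_mul t).neg
    have hi2 : Integrable (fun ω : Ω => (t * X n ω) ^ 2 / 2) := by
      have he : (fun ω : Ω => (t * X n ω) ^ 2 / 2) = fun ω => (t ^ 2 / 2) * X n ω ^ 2 := by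
        funext ω; ring
      rw [he]; exact (hXint2 n).const_mul _
    have hi0 : Integrable (fun ω : Ω => 1 + -(t * X n ω)) := (integrable_const 1).add hi1
    have hiq : Integrable (fun ω : Ω => 1 + -(t * X n ω) + (t * X n ω) ^ 2 / 2) := hi0.add hi2
    have e1 : ∫ ω, -(t * X n ω) = 0 := by
      rw [integral_neg, integral_const_mul, hXmean n]; simp
    have e2 : ∫ ω, (t * X n ω) ^ 2 / 2 = t ^ 2 / 2 * v n := by
      have he : (fun ω : Ω => (t * X n ω) ^ 2 / 2) = fun ω => (t ^ 2 / 2) * X n ω ^ 2 := by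
        funext ω; ring
      rw [he, integral_const_mul, hv n]
    have hquadval : ∫ ω, (1 + -(t * X n ω) + (t * X n ω) ^ 2 / 2) = 1 + t ^ 2 / 2 * v n := by
      rw [integral_add hi0 hi2, integral_add (integrable_const 1) hi1, e1, e2]
      simp
    have hdiff : u n - t ^ 2 / 2 * v n
        = ∫ ω, (g n ω - (1 + -(t * X n ω) + (t * X n ω) ^ 2 / 2)) := by
      rw [integral_sub (hgint n) hiq, hquadval]
      simp only [hu, hA]
      ring
    rw [hdiff]
    calc |∫ ω, (g n ω - (1 + -(t * X n ω) + (t * X n ω) ^ 2 / 2))|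
        = ‖∫ ω, (g n ω - (1 + -(t * X n ω) + (t * X n ω) ^ 2 / 2))‖ :=
          (Real.norm_eq_abs _).symm
      _ ≤ ∫ ω, ‖g n ω - (1 + -(t * X n ω) + (t * X n ω) ^ 2 / 2)‖ :=
          norm_integral_le_integral_norm _
      _ ≤ ∫ ω, C * |X n ω| ^ 3 := by
          apply integral_mono_of_nonneg
          · filter_upwards with ω; positivity
          · exact (hXint3 n).const_mul C
          · filter_upwards with ω
            have hxle : -(t * X n ω) ≤ t := by nlinarith [hXlb n ω]
            have hb := exp_taylor_bound ht hxle
            have habs : |(-(t * X n ω))| ^ 3 = t ^ 3 * |X n ω| ^ 3 := by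
              rw [abs_neg, abs_mul, abs_of_nonneg ht, mul_pow]
            rw [habs] at hb
            show ‖g n ω - (1 + -(t * X n ω) + (t * X n ω) ^ 2 / 2)‖ ≤ C * |X n ω| ^ 3
            rw [Real.norm_eq_abs]
            calc |g n ω - (1 + -(t * X n ω) + (t * X n ω) ^ 2 / 2)|
                = |g n ω - (1 + (-(t * X n ω)) + (-(t * X n ω)) ^ 2 / 2)| := by ring_nf
              _ ≤ t ^ 3 * |X n ω| ^ 3 / 6 * Real.exp t := hb
              _ = C * |X n ω| ^ 3 := by rw [hC]; ring
      _ = C * m3 n := by rw [hm3, integral_const_mul]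
  -- u n / v n → t²/2
  have huv : Tendsto (fun n => u n / v n) atTop (nhds (t ^ 2 / 2)) := by
    have hb : ∀ n, ‖u n / v n - t ^ 2 / 2‖ ≤ C * (m3 n / v n) := by
      intro n
      have hvne : v n ≠ 0 := (hvpos n).ne'
      have he : u n / v n - t ^ 2 / 2 = (u n - t ^ 2 / 2 * v n) / v n := by
        field_simp
      rw [Real.norm_eq_abs, he, abs_div, abs_of_pos (hvpos n), ← mul_div_assoc]
      exact (div_le_div_iff_of_pos_right (hvpos n)).2 (hkey n)
    have hlim : Tendsto (fun n => C * (m3 n / v n)) atTop (nhds 0) := by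
      have := h3.const_mul C
      simpa using this
    have h0 : Tendsto (fun n => u n / v n - t ^ 2 / 2) atTop (nhds 0) :=
      squeeze_zero_norm hb hlim
    have := h0.add (tendsto_const_nhds (α := ℕ) (x := t ^ 2 / 2))
    simpa using this
  -- u n → 0
  have hu0 : Tendsto u atTop (nhds 0) := by
    have h1 : Tendsto (fun n => (u n / v n) * v n) atTop (nhds (t ^ 2 / 2 * 0)) :=
      huv.mul hv0
    simp only [mul_zero] at h1
    exact h1.congr (fun n => div_mul_cancel₀ _ (hvpos n).ne')
  -- A n > 0
  have hApos : ∀ n, 0 < A n := by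
    intro n
    simp only [hA]
    apply (integral_pos_iff_support_of_nonneg (fun ω => (Real.exp_pos _).le) (hgint n)).2
    have hsupp : Function.support (g n) = Set.univ := by
      ext ω; simp [hg, (Real.exp_pos _).ne']
    rw [hsupp]
    simp
  -- log A n / v n → t²/2
  have hlog : Tendsto (fun n => Real.log (A n) / v n) atTop (nhds (t ^ 2 / 2)) := by
    have habs : Tendsto (fun n => |u n|) atTop (nhds 0) := by
      have := hu0.abs; simpa using this
    have hsmall : ∀ᶠ n in atTop, |u n| ≤ 1 / 2 :=
      habs.eventually_le_const (by norm_num : (0:ℝ) < 1/2)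
    have hev : ∀ᶠ n in atTop, ‖Real.log (A n) / v n - u n / v n‖ ≤ 2 * |u n / v n| * |u n| := by
      filter_upwards [hsmall] with n hn
      have hvne : v n ≠ 0 := (hvpos n).ne'
      have hx1 : |(-(u n))| < 1 := by rw [abs_neg]; linarith [abs_nonneg (u n)]
      have hlog1 := Real.abs_log_sub_add_sum_range_le hx1 1
      simp only [Finset.range_one, Finset.sum_singleton] at hlog1
      -- hlog1 : |(-u n)^(0+1)/(0+1) + log (1 - -u n)| ≤ |(-u n)|^(1+1) / (1 - |(-u n)|)
      have h1 : |(-(u n)) + Real.log (1 + u n)| ≤ |u n| ^ 2 / (1 - |u n|) := by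
        have e : (1 : ℝ) - (-(u n)) = 1 + u n := by ring
        rw [e] at hlog1
        simpa using hlog1
      have h3 : |u n| ^ 2 / (1 - |u n|) ≤ 2 * |u n| ^ 2 := by
        rw [div_le_iff₀ (by linarith : (0:ℝ) < 1 - |u n|)]
        nlinarith [sq_nonneg (u n), abs_nonneg (u n)]
      have hlogu : |Real.log (1 + u n) - u n| ≤ 2 * |u n| ^ 2 := by
        have e : Real.log (1 + u n) - u n = -(u n) + Real.log (1 + u n) := by ring
        rw [e]
        exact h1.trans h3
      have hAeq : A n = 1 + u n := by rw [hu]; ring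
      rw [Real.norm_eq_abs, div_sub_div_same, abs_div, abs_of_pos (hvpos n), hAeq]
      rw [div_le_iff₀ (hvpos n)]
      have hq : ∀ a b : ℝ, b ≠ 0 → 2 * a ^ 2 = 2 * (a / b) * a * b := by
        intro a b hb; field_simp
      calc |Real.log (1 + u n) - u n| ≤ 2 * |u n| ^ 2 := hlogu
        _ = 2 * (|u n| / v n) * |u n| * v n := hq _ _ hvne
        _ = 2 * |u n / v n| * |u n| * v n := by rw [abs_div, abs_of_pos (hvpos n)]
    have hblim : Tendsto (fun n => 2 * |u n / v n| * |u n|) atTop (nhds 0) := by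
      have h1 : Tendsto (fun n => |u n / v n|) atTop (nhds |t ^ 2 / 2|) := huv.abs
      have h2 := ((tendsto_const_nhds (α := ℕ) (x := (2:ℝ))).mul h1).mul habs
      simpa using h2
    have h0 : Tendsto (fun n => Real.log (A n) / v n - u n / v n) atTop (nhds 0) :=
      squeeze_zero_norm' hev hblim
    have := h0.add huv
    simpa using this
  -- conclude
  have hfinal : ∀ n, ((-Real.log (∫ ω, Real.exp (-(t * W n ω)))) - t) / v n
      = -(Real.log (A n) / v n) := by
    intro n
    have hsplit : A n = Real.exp t * ∫ ω, Real.exp (-(t * W n ω)) := by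
      have hptw : ∀ ω, g n ω = Real.exp t * Real.exp (-(t * W n ω)) := by
        intro ω
        have e : -(t * X n ω) = t + -(t * W n ω) := by simp only [hX]; ring
        simp only [hg]
        rw [e, Real.exp_add]
      simp only [hA, hptw, integral_const_mul]
    have hIpos : 0 < ∫ ω, Real.exp (-(t * W n ω)) := by
      have hp := hApos n
      rw [hsplit] at hp
      nlinarith [Real.exp_pos t]
    have hlogA : Real.log (A n) = t + Real.log (∫ ω, Real.exp (-(t * W n ω))) := by
      rw [hsplit, Real.log_mul (Real.exp_pos t).ne' hIpos.ne', Real.log_exp]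
    rw [hlogA]
    ring
  have hgoal := hlog.neg
  rw [show -(t ^ 2 / 2) = -t ^ 2 / 2 by ring] at hgoal
  exact hgoal.congr (fun n => (hfinal n).symm)
end

section
/- Let τ > 0, d ≥ 1, and let Z = (Z(t))_{t ∈ [0,τ]} be an ℝ^d-valued stochastic process on a probability space such that almost every sample path is left-continuous with right-hand limits and uniformly bounded, and such that the covariance matrix of the random vector Z(0+) = lim_{s↓0} Z(s) is positive definite. Let I ⊆ ℝ and let (G_γ)_{γ ∈ I} be a family of functions [0, ∞) → [0, ∞), each twice continuously differentiable with G_γ(0) = 0, Ġ_γ(u) > 0 for all u ≥ 0, Ġ_γ(0) = 1, and such that the map γ ↦ G̈_γ(0) is injective on I. Let ψ = (γ, β, A) and ψ₀ = (γ₀, β₀, A₀) with γ, γ₀ ∈ I, β, β₀ ∈ ℝ^d, β₀ ≠ 0, and A, A₀ : [0, τ] → [0, ∞) nondecreasing with A(0) = A₀(0) = 0 and continuously differentiable derivatives a, a₀ satisfying a₀(t) > 0 on [0, τ]. If, almost surely, G_γ(∫_0^t e^{β'Z(s)} dA(s)) = G_{γ₀}(∫_0^t e^{β₀'Z(s)}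 dA₀(s)) for all t ∈ [0, τ], then β = β₀, γ = γ₀, and A(t) = A₀(t) for all t ∈ [0, τ]. -/
open Set Filter Topology MeasureTheory


/-- Left-continuity on `(0,τ]` implies a.e.-measurability on `(0,τ]`. -/
lemma stmt18_aemeas {τ : ℝ} {u : ℝ → ℝ}
    (h : ∀ s ∈ Ioc (0:ℝ) τ, Tendsto u (𝓝[<] s) (𝓝 (u s))) :
    AEMeasurable u (volume.restrict (Ioc (0:ℝ) τ)) := by
  have hmeasn : ∀ n : ℕ, Measurable fun s : ℝ => u ((⌊(n+1 : ℝ) * s⌋ : ℝ) / (n+1)) := by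
    intro n
    have h1 : Measurable fun s : ℝ => (⌊(n+1:ℝ) * s⌋ : ℤ) :=
      Int.measurable_floor.comp (measurable_const.mul measurable_id)
    exact (measurable_from_top (f := fun k : ℤ => u ((k:ℝ)/(n+1)))).comp h1
  refine aemeasurable_of_tendsto_metrizable_ae'
    (f := fun n s => u ((⌊(n+1:ℝ) * s⌋ : ℝ) / (n+1)))
    (fun n => (hmeasn n).aemeasurable) ?_
  refine ae_restrict_of_forall_mem measurableSet_Ioc ?_
  intro s hs
  have hn1 : ∀ n : ℕ, (0:ℝ) < n + 1 := fun n => by positivity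
  have hvle : ∀ n : ℕ, (⌊(n+1:ℝ) * s⌋ : ℝ) / (n+1) ≤ s := by
    intro n
    rw [div_le_iff₀ (hn1 n)]
    calc ((⌊(n+1:ℝ) * s⌋ : ℝ)) ≤ (n+1:ℝ) * s := Int.floor_le _
    _ = s * (n+1) := mul_comm _ _
  have hvgt : ∀ n : ℕ, s - 1/(n+1) ≤ (⌊(n+1:ℝ) * s⌋ : ℝ) / (n+1) := by
    intro n
    rw [sub_le_iff_le_add, ← add_div, le_div_iff₀ (hn1 n)]
    have := Int.sub_one_lt_floor ((n+1:ℝ) * s)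
    nlinarith [Int.sub_one_lt_floor ((n+1:ℝ) * s)]
  have hvlim : Tendsto (fun n : ℕ => (⌊(n+1:ℝ) * s⌋ : ℝ) / (n+1)) atTop (𝓝 s) := by
    refine tendsto_of_tendsto_of_tendsto_of_le_of_le (g := fun n : ℕ => s - 1/(n+1)) ?_ tendsto_const_nhds hvgt hvle
    have : Tendsto (fun n : ℕ => 1/((n:ℝ)+1)) atTop (𝓝 0) := tendsto_one_div_add_atTop_nhds_zero_nat
    simpa using tendsto_const_nhds.sub this
  have hcont : Tendsto u (𝓝[≤] s) (𝓝 (u s)) := by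
    rw [show Iic s = Iio s ∪ {s} from (Iio_union_right).symm, nhdsWithin_union]
    rw [tendsto_sup]
    exact ⟨h s hs, by rw [nhdsWithin_singleton]; exact tendsto_pure_nhds u s⟩
  exact hcont.comp (tendsto_nhdsWithin_iff.mpr ⟨hvlim, Eventually.of_forall hvle⟩)


lemma stmt18_unique {f : ℝ → ℝ} {c c' : ℝ} {s : Set ℝ} {x : ℝ}
    (h : HasDerivWithinAt f c s x) (h' : HasDerivWithinAt f c' s x)
    (hu : UniqueDiffWithinAt ℝ s x) : c = c' := by
  rw [← h.derivWithin hu, h'.derivWithin hu]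

lemma stmt18_deriv_nonneg {A aa : ℝ → ℝ} {τ s : ℝ} (hτ : 0 < τ)
    (hm : MonotoneOn A (Icc 0 τ)) (hs : s ∈ Icc (0:ℝ) τ)
    (hd : HasDerivWithinAt A (aa s) (Icc 0 τ) s) : 0 ≤ aa s := by
  rw [hasDerivWithinAt_iff_tendsto_slope] at hd
  have hne : (𝓝[Icc (0:ℝ) τ \ {s}] s).NeBot := by
    rcases lt_or_eq_of_le hs.2 with hlt | heq
    · have h1 : s ∈ closure (Ioc s τ) := by
        rw [closure_Ioc hlt.ne]; exact ⟨le_rfl, hlt.le⟩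
      have := mem_closure_iff_nhdsWithin_neBot.mp h1
      exact this.mono (nhdsWithin_mono _ (fun y hy => ⟨⟨hs.1.trans hy.1.le, hy.2⟩, ne_of_gt hy.1⟩))
    · have h0 : (0:ℝ) < s := heq ▸ hτ
      have h1 : s ∈ closure (Ico 0 s) := by
        rw [closure_Ico h0.ne]; exact ⟨h0.le, le_rfl⟩
      have := mem_closure_iff_nhdsWithin_neBot.mp h1
      exact this.mono (nhdsWithin_mono _ (fun y hy => ⟨⟨hy.1, hy.2.le.trans hs.2⟩, ne_of_lt hy.2⟩))
  refine ge_of_tendsto hd ?_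
  filter_upwards [eventually_mem_nhdsWithin] with y hy
  have hyI : y ∈ Icc (0:ℝ) τ := hy.1
  have hyne : y ≠ s := hy.2
  rw [slope_def_field]
  rcases lt_or_gt_of_ne hyne with hlt | hgt
  · have h1 : A y - A s ≤ 0 := by simpa using hm hyI hs hlt.le
    have h2 : y - s < 0 := by simpa using hlt
    exact div_nonneg_iff.mpr (Or.inr ⟨h1, h2.le⟩)
  · apply div_nonneg
    · simpa using hm hs hyI hgt.le
    · simpa using hgt.le

lemma stmt18_variance {Ω : Type*} [MeasureSpace Ω] [IsProbabilityMeasure (volume : Measure Ω)]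
    {d : ℕ} {Z0 : Ω → Fin d → ℝ} (hZ0meas : Measurable Z0)
    (hZ0bdd : ∃ M : ℝ, ∀ᵐ ω ∂(volume : Measure Ω), ∀ i, |Z0 ω i| ≤ M)
    (hposdef : ∀ b : Fin d → ℝ, b ≠ 0 →
      0 < ∫ ω, (∑ i, b i * (Z0 ω i - ∫ ω', Z0 ω' i)) ^ 2)
    {b : Fin d → ℝ} (hb : b ≠ 0) {k : ℝ}
    (hconst : ∀ᵐ ω ∂(volume : Measure Ω), ∑ i, b i * Z0 ω i = k) : False := by
  obtain ⟨M, hM⟩ := hZ0bdd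
  have hint : ∀ i, Integrable (fun ω => Z0 ω i) (volume : Measure Ω) := by
    intro i
    refine (integrable_const M).mono' ((measurable_pi_apply i).comp hZ0meas).aestronglyMeasurable ?_
    filter_upwards [hM] with ω hω using by simpa [Real.norm_eq_abs] using hω i
  have h1 : ∫ ω, (∑ i, b i * Z0 ω i) = k := by
    rw [integral_congr_ae (g := fun _ => k) hconst]
    simp
  have h2 : ∫ ω, (∑ i, b i * Z0 ω i) = ∑ i, b i * ∫ ω, Z0 ω i := by
    rw [integral_finset_sum _ (fun i _ => (hint i).const_mul _)]
    exact Finset.sum_congr rfl fun i _ => MeasureTheory.integral_const_mul _ _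
  have hzero : ∀ᵐ ω ∂(volume : Measure Ω),
      (∑ i, b i * (Z0 ω i - ∫ ω', Z0 ω' i)) ^ 2 = 0 := by
    filter_upwards [hconst] with ω hω
    have : ∑ i, b i * (Z0 ω i - ∫ ω', Z0 ω' i)
        = (∑ i, b i * Z0 ω i) - ∑ i, b i * ∫ ω', Z0 ω' i := by
      rw [← Finset.sum_sub_distrib]
      exact Finset.sum_congr rfl fun i _ => mul_sub _ _ _
    rw [this, hω, ← h2, h1, sub_self]
    simp
  have := hposdef b hb
  rw [integral_congr_ae hzero] at this
  simp at this


lemma stmt18_nhds_lt_le {τ t : ℝ} (ht : t ∈ Ioc (0:ℝ) τ) :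
    𝓝[<] t ≤ 𝓝[Icc (0:ℝ) τ] t := by
  refine nhdsWithin_le_iff.mpr (mem_of_superset (Ioo_mem_nhdsLT_of_mem ⟨ht.1, le_rfl⟩) ?_)
  exact fun y hy => ⟨hy.1.le, hy.2.le.trans ht.2⟩

lemma stmt18_nhds_gt_le {τ : ℝ} (hτ : 0 < τ) :
    𝓝[>] (0:ℝ) ≤ 𝓝[Icc (0:ℝ) τ] 0 := by
  refine nhdsWithin_le_iff.mpr (mem_of_superset (Ioo_mem_nhdsGT_of_mem ⟨le_rfl, hτ⟩) ?_)
  exact fun y hy => ⟨hy.1.le, hy.2.le⟩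

lemma stmt18_tendsto_nhdsLe {f : ℝ → ℝ} {t : ℝ} (h : Tendsto f (𝓝[<] t) (𝓝 (f t))) :
    Tendsto f (𝓝[≤] t) (𝓝 (f t)) := by
  rw [show Iic t = Iio t ∪ {t} from (Iio_union_right).symm, nhdsWithin_union, tendsto_sup]
  exact ⟨h, by rw [nhdsWithin_singleton]; exact tendsto_pure_nhds f t⟩


lemma stmt18_path_facts {τ : ℝ} (hτ : 0 < τ) {d : ℕ} {W : ℝ → Fin d → ℝ} {W0 : Fin d → ℝ}
    (hlc : ∀ s ∈ Ioc (0:ℝ) τ, ∀ i, Tendsto (fun r => W r i) (𝓝[<] s) (𝓝 (W s i)))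
    (hbd : ∃ M : ℝ, ∀ s ∈ Icc (0:ℝ) τ, ∀ i, |W s i| ≤ M)
    (h0 : ∀ i, Tendsto (fun r => W r i) (𝓝[>] (0:ℝ)) (𝓝 (W0 i)))
    (β : Fin d → ℝ) {a : ℝ → ℝ} (hacont : ContinuousOn a (Icc 0 τ)) :
    (∀ t ∈ Icc (0:ℝ) τ, IntervalIntegrable (fun s => Real.exp (∑ i, β i * W s i) * a s) volume 0 t)
    ∧ HasDerivWithinAt (fun t => ∫ s in (0:ℝ)..t, Real.exp (∑ i, β i * W s i) * a s)
        (Real.exp (∑ i, β i * W0 i) * a 0) (Icc 0 τ) 0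
    ∧ (∀ t ∈ Ioc (0:ℝ) τ,
        HasDerivWithinAt (fun u => ∫ s in (0:ℝ)..u, Real.exp (∑ i, β i * W s i) * a s)
          (Real.exp (∑ i, β i * W t i) * a t) (Icc 0 t) t) := by
  obtain ⟨M, hM⟩ := hbd
  set g : ℝ → ℝ := fun s => Real.exp (∑ i, β i * W s i) * a s with hg
  -- measurability
  have hmeasW : ∀ i, AEMeasurable (fun s => W s i) (volume.restrict (Ioc (0:ℝ) τ)) :=
    fun i => stmt18_aemeas (fun s hs => hlc s hs i)
  have haam : AEMeasurable a (volume.restrict (Ioc (0:ℝ) τ)) :=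
    (hacont.aemeasurable measurableSet_Icc).mono_measure
      (Measure.restrict_mono Ioc_subset_Icc_self le_rfl)
  have hgm : AEStronglyMeasurable g (volume.restrict (Ioc (0:ℝ) τ)) := by
    refine AEMeasurable.aestronglyMeasurable ?_
    exact (Real.measurable_exp.comp_aemeasurable
      (Finset.aemeasurable_fun_sum _ fun i _ => (hmeasW i).const_mul _)).mul haam
  -- bound
  obtain ⟨Ca, hCa⟩ := isCompact_Icc.exists_bound_of_continuousOn hacont
  have hsumbd : ∀ s ∈ Icc (0:ℝ) τ, ∑ i, β i * W s i ≤ ∑ i, |β i| * M := by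
    intro s hs
    refine Finset.sum_le_sum fun i _ => ?_
    calc β i * W s i ≤ |β i * W s i| := le_abs_self _
    _ = |β i| * |W s i| := abs_mul _ _
    _ ≤ |β i| * M := by
        have := hM s hs i
        have hMnn : (0:ℝ) ≤ M := le_trans (abs_nonneg _) this
        exact mul_le_mul_of_nonneg_left this (abs_nonneg _)
  have hgbd : ∀ s ∈ Ioc (0:ℝ) τ, ‖g s‖ ≤ Real.exp (∑ i, |β i| * M) * Ca := by
    intro s hs
    have hs' : s ∈ Icc (0:ℝ) τ := Ioc_subset_Icc_self hs
    rw [hg]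
    calc ‖Real.exp (∑ i, β i * W s i) * a s‖
        = Real.exp (∑ i, β i * W s i) * ‖a s‖ := by
          rw [norm_mul, Real.norm_eq_abs (Real.exp _), abs_of_pos (Real.exp_pos _)]
    _ ≤ Real.exp (∑ i, |β i| * M) * Ca := by
        refine mul_le_mul (Real.exp_le_exp.mpr (hsumbd s hs')) (hCa s hs') (norm_nonneg _)
          (Real.exp_pos _).le
  -- integrability
  have hIOn : IntegrableOn g (Ioc (0:ℝ) τ) volume := by
    refine Integrable.mono' (g := fun _ => Real.exp (∑ i, |β i| * M) * Ca) ?_ hgm ?_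
    · exact integrableOn_const measure_Ioc_lt_top.ne
    · exact ae_restrict_of_forall_mem measurableSet_Ioc hgbd
  have hInt : ∀ t ∈ Icc (0:ℝ) τ, IntervalIntegrable g volume 0 t := by
    intro t ht
    rw [intervalIntegrable_iff, uIoc_of_le ht.1]
    exact hIOn.mono_set (Ioc_subset_Ioc le_rfl ht.2)
  refine ⟨hInt, ?_, ?_⟩
  · -- right derivative at 0
    have htend : Tendsto g (𝓝[>] (0:ℝ)) (𝓝 (Real.exp (∑ i, β i * W0 i) * a 0)) := by
      have hsum : Tendsto (fun s => ∑ i, β i * W s i) (𝓝[>] (0:ℝ)) (𝓝 (∑ i, β i * W0 i)) :=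
        tendsto_finset_sum _ fun i _ => ((h0 i).const_mul _)
      have hexp := (Real.continuous_exp.tendsto _).comp hsum
      have hatend : Tendsto a (𝓝[>] (0:ℝ)) (𝓝 (a 0)) :=
        (hacont 0 ⟨le_rfl, hτ.le⟩).mono_left (stmt18_nhds_gt_le hτ)
      exact hexp.mul hatend
    have hsm : StronglyMeasurableAtFilter g (𝓝[>] (0:ℝ)) :=
      ⟨Ioc 0 τ, Ioc_mem_nhdsGT_of_mem ⟨le_rfl, hτ⟩, hgm⟩
    have := intervalIntegral.integral_hasDerivWithinAt_of_tendsto_ae_right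
      (hInt 0 ⟨le_rfl, hτ.le⟩) (s := Ici (0:ℝ)) (t := Ioi (0:ℝ)) hsm
      (htend.mono_left inf_le_left)
    exact this.mono Icc_subset_Ici_self
  · -- left derivative at t
    intro t ht
    have hgt : Tendsto g (𝓝[<] t) (𝓝 (g t)) := by
      have hsum : Tendsto (fun s => ∑ i, β i * W s i) (𝓝[<] t) (𝓝 (∑ i, β i * W t i)) :=
        tendsto_finset_sum _ fun i _ => ((hlc t ht i).const_mul _)
      have hexp := (Real.continuous_exp.tendsto _).comp hsum
      have hatend : Tendsto a (𝓝[<] t) (𝓝 (a t)) :=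
        (hacont t (Ioc_subset_Icc_self ht)).mono_left (stmt18_nhds_lt_le ht)
      exact hexp.mul hatend
    have hgle : ContinuousWithinAt g (Iic t) t := stmt18_tendsto_nhdsLe hgt
    have hmem : Ioc (0:ℝ) τ ∈ 𝓝[≤] t := by
      refine mem_of_superset (inter_mem_nhdsWithin (Iic t) (Ioi_mem_nhds ht.1)) ?_
      exact fun y hy => ⟨hy.2, hy.1.trans ht.2⟩
    have hsm : StronglyMeasurableAtFilter g (𝓝[≤] t) := ⟨Ioc 0 τ, hmem, hgm⟩
    have := intervalIntegral.integral_hasDerivWithinAt_right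
      (hInt t (Ioc_subset_Icc_self ht)) (s := Iic t) (t := Iic t) hsm hgle
    exact this.mono Icc_subset_Iic_self

/-- identifiability of the proportional hazards frailty regression model,
Proposition 4 of the paper. `Z` is a caglad, bounded `ℝ^d`-valued covariate process on
`[0, τ]` with right limit `Z(0+) = Z0` at `0` whose covariance matrix is positive definite;
`(G_γ)_{γ ∈ I}` is a family of twice continuously differentiable negative log frailty
transforms with `G_γ(0) = 0`, `Ġ_γ > 0`, `Ġ_γ(0) = 1`, and `γ ↦ G̈_γ(0)` injective on `I`.
If the conditional cumulative hazards agree, i.e.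
`G_γ(∫_0^t e^{β'Z(s)} a(s) ds) = G_{γ₀}(∫_0^t e^{β₀'Z(s)} a₀(s) ds)` for all `t ∈ [0, τ]`
almost surely, where `A, A₀` are nondecreasing, vanish at `0` and have continuously
differentiable derivatives `a, a₀` with `a₀ > 0`, then `β = β₀`, `γ = γ₀` and `A = A₀`
on `[0, τ]`. -/
theorem stmt_18 {Ω : Type*} [MeasureSpace Ω] [IsProbabilityMeasure (volume : Measure Ω)]
    (τ : ℝ) (hτ : 0 < τ) (d : ℕ) (hd : 1 ≤ d)
    (Z : Ω → ℝ → Fin d → ℝ) (Z0 : Ω → Fin d → ℝ)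
    (hZmeas : ∀ s : ℝ, Measurable (fun ω => Z ω s))
    (hZ0meas : Measurable Z0)
    (hpath : ∀ᵐ ω ∂(volume : Measure Ω),
      (∀ s ∈ Ioc (0:ℝ) τ, ∀ i, Tendsto (fun r => Z ω r i) (𝓝[<] s) (𝓝 (Z ω s i))) ∧
      (∀ s ∈ Ico (0:ℝ) τ, ∀ i, ∃ L : ℝ, Tendsto (fun r => Z ω r i) (𝓝[>] s) (𝓝 L)) ∧
      (∃ M : ℝ, ∀ s ∈ Icc (0:ℝ) τ, ∀ i, |Z ω s i| ≤ M) ∧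
      (∀ i, Tendsto (fun r => Z ω r i) (𝓝[>] 0) (𝓝 (Z0 ω i))))
    (hZ0bdd : ∃ M : ℝ, ∀ᵐ ω ∂(volume : Measure Ω), ∀ i, |Z0 ω i| ≤ M)
    (hposdef : ∀ b : Fin d → ℝ, b ≠ 0 →
      0 < ∫ ω, (∑ i, b i * (Z0 ω i - ∫ ω', Z0 ω' i)) ^ 2)
    (I : Set ℝ) (G G' G'' : ℝ → ℝ → ℝ)
    (hGder : ∀ γ ∈ I, ∀ u ∈ Ici (0:ℝ), HasDerivWithinAt (G γ) (G' γ u) (Ici 0) u)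
    (hGder2 : ∀ γ ∈ I, ∀ u ∈ Ici (0:ℝ), HasDerivWithinAt (G' γ) (G'' γ u) (Ici 0) u)
    (hG''cont : ∀ γ ∈ I, ContinuousOn (G'' γ) (Ici 0))
    (hGnonneg : ∀ γ ∈ I, ∀ u ∈ Ici (0:ℝ), 0 ≤ G γ u)
    (hG0 : ∀ γ ∈ I, G γ 0 = 0)
    (hG'pos : ∀ γ ∈ I, ∀ u ∈ Ici (0:ℝ), 0 < G' γ u)
    (hG'0 : ∀ γ ∈ I, G' γ 0 = 1)
    (hinj : InjOn (fun γ => G'' γ 0) I)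
    (γ γ₀ : ℝ) (hγ : γ ∈ I) (hγ₀ : γ₀ ∈ I)
    (β β₀ : Fin d → ℝ) (hβ₀ : β₀ ≠ 0)
    (A A₀ a a₀ a' a₀' : ℝ → ℝ)
    (hA0 : A 0 = 0) (hA₀0 : A₀ 0 = 0)
    (hAmono : MonotoneOn A (Icc 0 τ)) (hA₀mono : MonotoneOn A₀ (Icc 0 τ))
    (hAder : ∀ s ∈ Icc (0:ℝ) τ, HasDerivWithinAt A (a s) (Icc 0 τ) s)
    (hA₀der : ∀ s ∈ Icc (0:ℝ) τ, HasDerivWithinAt A₀ (a₀ s) (Icc 0 τ) s)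
    (hader : ∀ s ∈ Icc (0:ℝ) τ, HasDerivWithinAt a (a' s) (Icc 0 τ) s)
    (ha₀der : ∀ s ∈ Icc (0:ℝ) τ, HasDerivWithinAt a₀ (a₀' s) (Icc 0 τ) s)
    (ha'cont : ContinuousOn a' (Icc 0 τ)) (ha₀'cont : ContinuousOn a₀' (Icc 0 τ))
    (ha₀pos : ∀ s ∈ Icc (0:ℝ) τ, 0 < a₀ s)
    (heq : ∀ᵐ ω ∂(volume : Measure Ω), ∀ t ∈ Icc (0:ℝ) τ,
      G γ (∫ s in (0:ℝ)..t, Real.exp (∑ i, β i * Z ω s i) * a s)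
        = G γ₀ (∫ s in (0:ℝ)..t, Real.exp (∑ i, β₀ i * Z ω s i) * a₀ s)) :
    β = β₀ ∧ γ = γ₀ ∧ ∀ t ∈ Icc (0:ℝ) τ, A t = A₀ t := by
  classical
  haveI : (ae (volume : Measure Ω)).NeBot := ae_neBot.mpr (IsProbabilityMeasure.ne_zero _)
  have h0mem : (0:ℝ) ∈ Icc (0:ℝ) τ := ⟨le_rfl, hτ.le⟩
  have hud : UniqueDiffWithinAt ℝ (Icc (0:ℝ) τ) 0 := (uniqueDiffOn_Icc hτ) 0 h0mem
  have hacont : ContinuousOn a (Icc 0 τ) := fun s hs => (hader s hs).continuousWithinAt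
  have ha₀cont : ContinuousOn a₀ (Icc 0 τ) := fun s hs => (ha₀der s hs).continuousWithinAt
  have ha_nn : ∀ s ∈ Icc (0:ℝ) τ, 0 ≤ a s :=
    fun s hs => stmt18_deriv_nonneg hτ hAmono hs (hAder s hs)
  have ha₀_nn : ∀ s ∈ Icc (0:ℝ) τ, 0 ≤ a₀ s := fun s hs => (ha₀pos s hs).le
  -- STEP 1: first-order identity a.e.
  have hkey1 : ∀ᵐ ω ∂(volume : Measure Ω),
      Real.exp (∑ i, β i * Z0 ω i) * a 0 = Real.exp (∑ i, β₀ i * Z0 ω i) * a₀ 0 := by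
    filter_upwards [hpath, heq] with ω hω hωeq
    obtain ⟨hlc, -, hbd, h0⟩ := hω
    obtain ⟨hInt, hD0, -⟩ := stmt18_path_facts hτ hlc hbd h0 β hacont
    obtain ⟨hInt₀, hD0₀, -⟩ := stmt18_path_facts hτ hlc hbd h0 β₀ ha₀cont
    set f : ℝ → ℝ := fun t => ∫ s in (0:ℝ)..t, Real.exp (∑ i, β i * Z ω s i) * a s with hf
    set f₀ : ℝ → ℝ := fun t => ∫ s in (0:ℝ)..t, Real.exp (∑ i, β₀ i * Z ω s i) * a₀ s with hf₀
    have hmaps : MapsTo f (Icc 0 τ) (Ici 0) := by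
      intro u hu
      exact intervalIntegral.integral_nonneg hu.1
        (fun s hs => mul_nonneg (Real.exp_pos _).le (ha_nn s ⟨hs.1, hs.2.trans hu.2⟩))
    have hmaps₀ : MapsTo f₀ (Icc 0 τ) (Ici 0) := by
      intro u hu
      exact intervalIntegral.integral_nonneg hu.1
        (fun s hs => mul_nonneg (Real.exp_pos _).le (ha₀_nn s ⟨hs.1, hs.2.trans hu.2⟩))
    have hf0 : f 0 = 0 := intervalIntegral.integral_same
    have hf₀0 : f₀ 0 = 0 := intervalIntegral.integral_same
    have hG1 : HasDerivWithinAt (G γ) 1 (Ici 0) (f 0) := by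
      rw [hf0]
      simpa [hG'0 γ hγ] using hGder γ hγ 0 self_mem_Ici
    have hG1₀ : HasDerivWithinAt (G γ₀) 1 (Ici 0) (f₀ 0) := by
      rw [hf₀0]
      simpa [hG'0 γ₀ hγ₀] using hGder γ₀ hγ₀ 0 self_mem_Ici
    have hc1 := HasDerivWithinAt.comp 0 hG1 hD0 hmaps
    have hc2 := HasDerivWithinAt.comp 0 hG1₀ hD0₀ hmaps₀
    simp only [Function.comp_def] at hc1 hc2
    have hc2' : HasDerivWithinAt (fun t => G γ (f t))
        (1 * (Real.exp (∑ i, β₀ i * Z0 ω i) * a₀ 0)) (Icc 0 τ) 0 :=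
      hc2.congr (fun y hy => hωeq y hy) (hωeq 0 h0mem)
    have := stmt18_unique hc1 hc2' hud
    simpa using this
  -- positivity of a 0
  have ha0pos : 0 < a 0 := by
    obtain ⟨ω, hω⟩ := hkey1.exists
    have h₀ : 0 < Real.exp (∑ i, β₀ i * Z0 ω i) * a₀ 0 :=
      mul_pos (Real.exp_pos _) (ha₀pos 0 h0mem)
    have h1 : 0 < Real.exp (∑ i, β i * Z0 ω i) * a 0 := by rw [hω]; exact h₀
    by_contra h
    push_neg at h
    exact absurd h1 (not_lt.mpr (mul_nonpos_iff.mpr (Or.inl ⟨(Real.exp_pos _).le, h⟩)))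
  -- STEP 2: β = β₀
  have hββ₀ : β = β₀ := by
    by_contra hne
    have hb : β - β₀ ≠ 0 := sub_ne_zero.mpr hne
    refine stmt18_variance hZ0meas hZ0bdd hposdef hb
      (k := Real.log (a₀ 0) - Real.log (a 0)) ?_
    filter_upwards [hkey1] with ω hω
    have h1 : ∑ i, β i * Z0 ω i + Real.log (a 0) = ∑ i, β₀ i * Z0 ω i + Real.log (a₀ 0) := by
      have h2 := congrArg Real.log hω
      rwa [Real.log_mul (Real.exp_ne_zero _) (ne_of_gt ha0pos),
        Real.log_mul (Real.exp_ne_zero _) (ne_of_gt (ha₀pos 0 h0mem)),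
        Real.log_exp, Real.log_exp] at h2
    have h3 : ∑ i, (β - β₀) i * Z0 ω i = ∑ i, β i * Z0 ω i - ∑ i, β₀ i * Z0 ω i := by
      rw [← Finset.sum_sub_distrib]
      exact Finset.sum_congr rfl fun i _ => by simp [sub_mul]
    rw [h3]; linarith
  subst hββ₀
  -- a 0 = a₀ 0
  have ha00 : a 0 = a₀ 0 := by
    obtain ⟨ω, hω⟩ := hkey1.exists
    exact mul_left_cancel₀ (Real.exp_ne_zero _) hω
  -- STEP 3: workhorse a.e. statement
  have hwork : ∀ᵐ ω ∂(volume : Measure Ω),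
      (∀ t ∈ Ioc (0:ℝ) τ,
        G' γ (∫ s in (0:ℝ)..t, Real.exp (∑ i, β i * Z ω s i) * a s) * a t
          = G' γ₀ (∫ s in (0:ℝ)..t, Real.exp (∑ i, β i * Z ω s i) * a₀ s) * a₀ t)
      ∧ (G'' γ 0 * (Real.exp (∑ i, β i * Z0 ω i) * a 0) * a 0 + a' 0
          = G'' γ₀ 0 * (Real.exp (∑ i, β i * Z0 ω i) * a 0) * a 0 + a₀' 0) := by
    filter_upwards [hpath, heq] with ω hω hωeq
    obtain ⟨hlc, -, hbd, h0⟩ := hω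
    obtain ⟨hInt, hD0, hDt⟩ := stmt18_path_facts hτ hlc hbd h0 β hacont
    obtain ⟨hInt₀, hD0₀, hDt₀⟩ := stmt18_path_facts hτ hlc hbd h0 β ha₀cont
    set f : ℝ → ℝ := fun t => ∫ s in (0:ℝ)..t, Real.exp (∑ i, β i * Z ω s i) * a s with hf
    set f₀ : ℝ → ℝ := fun t => ∫ s in (0:ℝ)..t, Real.exp (∑ i, β i * Z ω s i) * a₀ s with hf₀
    have hfnn : ∀ u ∈ Icc (0:ℝ) τ, 0 ≤ f u := by
      intro u hu
      exact intervalIntegral.integral_nonneg hu.1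
        (fun s hs => mul_nonneg (Real.exp_pos _).le (ha_nn s ⟨hs.1, hs.2.trans hu.2⟩))
    have hf₀nn : ∀ u ∈ Icc (0:ℝ) τ, 0 ≤ f₀ u := by
      intro u hu
      exact intervalIntegral.integral_nonneg hu.1
        (fun s hs => mul_nonneg (Real.exp_pos _).le (ha₀_nn s ⟨hs.1, hs.2.trans hu.2⟩))
    have hf0 : f 0 = 0 := intervalIntegral.integral_same
    have hf₀0 : f₀ 0 = 0 := intervalIntegral.integral_same
    have hE2 : ∀ t ∈ Ioc (0:ℝ) τ, G' γ (f t) * a t = G' γ₀ (f₀ t) * a₀ t := by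
      intro t ht
      have htIcc : t ∈ Icc (0:ℝ) τ := Ioc_subset_Icc_self ht
      have hudt : UniqueDiffWithinAt ℝ (Icc (0:ℝ) t) t :=
        (uniqueDiffOn_Icc ht.1) t ⟨ht.1.le, le_rfl⟩
      have hmapst : MapsTo f (Icc 0 t) (Ici 0) :=
        fun u hu => hfnn u ⟨hu.1, hu.2.trans ht.2⟩
      have hmapst₀ : MapsTo f₀ (Icc 0 t) (Ici 0) :=
        fun u hu => hf₀nn u ⟨hu.1, hu.2.trans ht.2⟩
      have hG1 : HasDerivWithinAt (G γ) (G' γ (f t)) (Ici 0) (f t) :=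
        hGder γ hγ _ (hfnn t htIcc)
      have hG1₀ : HasDerivWithinAt (G γ₀) (G' γ₀ (f₀ t)) (Ici 0) (f₀ t) :=
        hGder γ₀ hγ₀ _ (hf₀nn t htIcc)
      have hc1 := HasDerivWithinAt.comp t hG1 (hDt t ht) hmapst
      have hc2 := HasDerivWithinAt.comp t hG1₀ (hDt₀ t ht) hmapst₀
      simp only [Function.comp_def] at hc1 hc2
      have hc2' : HasDerivWithinAt (fun u => G γ (f u))
          (G' γ₀ (f₀ t) * (Real.exp (∑ i, β i * Z ω t i) * a₀ t)) (Icc 0 t) t :=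
        hc2.congr (fun y hy => hωeq y ⟨hy.1, hy.2.trans ht.2⟩) (hωeq t htIcc)
      have hcan := stmt18_unique hc1 hc2' hudt
      have hexp : Real.exp (∑ i, β i * Z ω t i) ≠ 0 := Real.exp_ne_zero _
      apply mul_right_cancel₀ hexp
      linear_combination hcan
    refine ⟨hE2, ?_⟩
    have hmaps : MapsTo f (Icc 0 τ) (Ici 0) := fun u hu => hfnn u hu
    have hmaps₀ : MapsTo f₀ (Icc 0 τ) (Ici 0) := fun u hu => hf₀nn u hu
    have hG'1 : HasDerivWithinAt (G' γ) (G'' γ 0) (Ici 0) (f 0) := by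
      rw [hf0]; exact hGder2 γ hγ 0 self_mem_Ici
    have hG'1₀ : HasDerivWithinAt (G' γ₀) (G'' γ₀ 0) (Ici 0) (f₀ 0) := by
      rw [hf₀0]; exact hGder2 γ₀ hγ₀ 0 self_mem_Ici
    have hcompL := HasDerivWithinAt.comp 0 hG'1 hD0 hmaps
    have hcompR := HasDerivWithinAt.comp 0 hG'1₀ hD0₀ hmaps₀
    simp only [Function.comp_def] at hcompL hcompR
    have hL := hcompL.mul (hader 0 h0mem)
    have hR := hcompR.mul (ha₀der 0 h0mem)
    have heqLR : ∀ y ∈ Icc (0:ℝ) τ, G' γ (f y) * a y = G' γ₀ (f₀ y) * a₀ y := by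
      intro y hy
      rcases eq_or_lt_of_le hy.1 with h0y | h0y
      · rw [← h0y, hf0, hf₀0, hG'0 γ hγ, hG'0 γ₀ hγ₀, ha00]
      · exact hE2 y ⟨h0y, hy.2⟩
    have hR' : HasDerivWithinAt (fun y => G' γ (f y) * a y)
        (G'' γ₀ 0 * (Real.exp (∑ i, β i * Z0 ω i) * a₀ 0) * a₀ 0
          + G' γ₀ (f₀ 0) * a₀' 0) (Icc 0 τ) 0 :=
      hR.congr (fun y hy => heqLR y hy) (heqLR 0 h0mem)
    have hfin := stmt18_unique hL hR' hud
    rw [hf0, hf₀0, hG'0 γ hγ, hG'0 γ₀ hγ₀] at hfin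
    rw [← ha00] at hfin
    linarith
  -- STEP 4: γ = γ₀
  have hγγ₀ : γ = γ₀ := by
    refine hinj hγ hγ₀ ?_
    by_contra hne
    have hden : (G'' γ 0 - G'' γ₀ 0) * (a 0 * a 0) ≠ 0 :=
      mul_ne_zero (sub_ne_zero.mpr hne) (by positivity)
    set C := (a₀' 0 - a' 0) / ((G'' γ 0 - G'' γ₀ 0) * (a 0 * a 0)) with hC
    have hconst : ∀ᵐ ω ∂(volume : Measure Ω), Real.exp (∑ i, β i * Z0 ω i) = C := by
      filter_upwards [hwork] with ω hω
      have h2 := hω.2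
      rw [hC, eq_div_iff hden]
      ring_nf
      ring_nf at h2
      linarith
    obtain ⟨ω₁, hω₁⟩ := hconst.exists
    have hCpos : 0 < C := hω₁ ▸ Real.exp_pos _
    refine stmt18_variance hZ0meas hZ0bdd hposdef hβ₀ (k := Real.log C) ?_
    filter_upwards [hconst] with ω hω
    rw [← hω, Real.log_exp]
  subst hγγ₀
  refine ⟨rfl, rfl, ?_⟩
  -- STEP 5: A = A₀
  obtain ⟨ω, hωw, hωeq⟩ := (hwork.and heq).exists
  set f : ℝ → ℝ := fun t => ∫ s in (0:ℝ)..t, Real.exp (∑ i, β i * Z ω s i) * a s with hf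
  set f₀ : ℝ → ℝ := fun t => ∫ s in (0:ℝ)..t, Real.exp (∑ i, β i * Z ω s i) * a₀ s with hf₀
  have hfnn : ∀ u ∈ Icc (0:ℝ) τ, 0 ≤ f u := by
    intro u hu
    exact intervalIntegral.integral_nonneg hu.1
      (fun s hs => mul_nonneg (Real.exp_pos _).le (ha_nn s ⟨hs.1, hs.2.trans hu.2⟩))
  have hf₀nn : ∀ u ∈ Icc (0:ℝ) τ, 0 ≤ f₀ u := by
    intro u hu
    exact intervalIntegral.integral_nonneg hu.1
      (fun s hs => mul_nonneg (Real.exp_pos _).le (ha₀_nn s ⟨hs.1, hs.2.trans hu.2⟩))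
  have hGcont : ContinuousOn (G γ) (Ici 0) := fun u hu => (hGder γ hγ u hu).continuousWithinAt
  have hstrict : StrictMonoOn (G γ) (Ici 0) := by
    refine strictMonoOn_of_deriv_pos (convex_Ici 0) hGcont ?_
    intro x hx
    rw [interior_Ici] at hx
    have hxI : x ∈ Ici (0:ℝ) := mem_Ici.mpr (le_of_lt (mem_Ioi.mp hx))
    have hda : HasDerivAt (G γ) (G' γ x) x :=
      (hGder γ hγ x hxI).hasDerivAt (Ici_mem_nhds hx)
    rw [hda.deriv]
    exact hG'pos γ hγ x hxI
  have hff₀ : ∀ t ∈ Icc (0:ℝ) τ, f t = f₀ t := by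
    intro t ht
    exact hstrict.injOn (hfnn t ht) (hf₀nn t ht) (hωeq t ht)
  have haa₀ : ∀ s ∈ Icc (0:ℝ) τ, a s = a₀ s := by
    intro s hs
    rcases eq_or_lt_of_le hs.1 with h0s | h0s
    · rw [← h0s]; exact ha00
    · have h1 : G' γ (f s) * a s = G' γ (f₀ s) * a₀ s := hωw.1 s ⟨h0s, hs.2⟩
      rw [hff₀ s hs] at h1
      exact mul_left_cancel₀ (ne_of_gt (hG'pos γ hγ _ (hf₀nn s hs))) h1
  intro t ht
  have hzero : ∀ x ∈ Icc (0:ℝ) τ, HasDerivWithinAt (fun y => A y - A₀ y) 0 (Icc 0 τ) x := by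
    intro x hx
    have h1 := (hAder x hx).sub (hA₀der x hx)
    rwa [haa₀ x hx, sub_self] at h1
  have hmvt := Convex.norm_image_sub_le_of_norm_hasDerivWithin_le (C := 0)
    (f' := fun _ => (0:ℝ)) hzero (fun x _ => by simp) (convex_Icc 0 τ) h0mem ht
  rw [hA0, hA₀0] at hmvt
  simp only [sub_zero, zero_mul] at hmvt
  have := norm_le_zero_iff.mp hmvt
  linarith [sub_eq_zero.mp this]
end
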